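/- arXiv:2204.12082 — 9 statements merged into one kernel-verified Lean document; each statement's English description precedes it below -/
import Mathlib

section
/- Let r ≥ 1 be an integer and let z be a nonzero complex number. Then there exists exactly one r-th root of unity ω such that the principal argument of z·ω⁻¹ lies in the half-open interval (−π/r, π/r]; moreover, this ω satisfies |z − ω| ≤ |z − ω'| for every r-th root of unity ω'. (In other words, every nonzero complex number is related to exactly one r-th root of unity, where relatedness means ω minimizes the distance |z − ω'| over all r-th roots of unity ω', with ties broken toward the root of smaller argument.) -/
/-!
Write `w = z ω⁻¹`. As `ω` runs over the `r`-th roots of unity, `w` runs over the `r`-th roots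
of `z ^ r`, and `z - ω = ω (w - 1)`. The sector `-π / r < arg w ≤ π / r` is a
fundamental domain for `w ↦ w ^ r`: there `arg (w ^ r) = r arg w`, so `w` is the unique root of
`z ^ r` in the sector, namely its principal root `(z ^ r) ^ (1 / r)`. For fixed `‖w‖`, the
distance `‖w - 1‖` grows with `|arg w|`, and every other root lies outside the sector.
-/

open Complex

namespace Complex

def principalSector (n : ℕ) : Set ℂ :=
  {x | arg x ∈ Set.Ioc (-(Real.pi / n)) (Real.pi / n)}

variable {n : ℕ}

theorem arg_pow_of_mem_principalSector (hn : n ≠ 0) {x : ℂ} (hx : x ∈ principalSector n) :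
    arg (x ^ n) = n * arg x := by
  have hn' : (0 : ℝ) < n := by positivity
  obtain ⟨hlo, hhi⟩ := hx
  have hmem : (n : ℝ) * arg x ∈ Set.Ioc (-Real.pi) Real.pi := by
    constructor
    · have h := mul_lt_mul_of_pos_left hlo hn'
      rwa [mul_neg, mul_div_cancel₀ _ hn'.ne'] at h
    · have h := mul_le_mul_of_nonneg_left hhi hn'.le
      rwa [mul_div_cancel₀ _ hn'.ne'] at h
  rw [← arg_coe_angle_toReal_eq_arg, arg_pow_coe_angle, ← Real.Angle.coe_nsmul, nsmul_eq_mul,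
    Real.Angle.toReal_coe_eq_self_iff_mem_Ioc.mpr hmem]

theorem injOn_pow_principalSector (hn : n ≠ 0) :
    Set.InjOn (· ^ n) (principalSector n) := by
  intro x hx y hy hxy
  have hnorm : ‖x‖ = ‖y‖ :=
    (pow_left_inj₀ (norm_nonneg x) (norm_nonneg y) hn).mp (by simpa using congrArg norm hxy)
  have harg : arg x = arg y := by
    have h := congrArg arg hxy
    simp only [arg_pow_of_mem_principalSector hn hx, arg_pow_of_mem_principalSector hn hy] at h
    exact mul_left_cancel₀ (Nat.cast_ne_zero.mpr hn) h
  exact ext_norm_arg hnorm harg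

theorem arg_cpow_natCast_inv (hn : n ≠ 0) (x : ℂ) : arg (x ^ (n⁻¹ : ℂ)) = arg x / n := by
  obtain rfl | hx := eq_or_ne x 0
  · simp [zero_cpow (inv_ne_zero (Nat.cast_ne_zero.mpr hn))]
  have hn' : (0 : ℝ) < n := by positivity
  obtain ⟨hlo, hhi⟩ := arg_mem_Ioc x
  have hn1 : (1 : ℝ) ≤ n := Nat.one_le_cast.mpr (Nat.one_le_iff_ne_zero.mpr hn)
  have him : (log x * (n : ℂ)⁻¹).im = arg x / n := by
    rw [← ofReal_natCast, ← ofReal_inv, mul_comm, im_ofReal_mul, log_im, inv_mul_eq_div]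
  rw [cpow_def_of_ne_zero hx, arg_exp, him, toIocMod_eq_self]
  constructor
  · rw [lt_div_iff₀ hn']
    nlinarith [Real.pi_pos]
  · rw [div_le_iff₀ hn']
    nlinarith [Real.pi_pos]

theorem cpow_natCast_inv_mem_principalSector (hn : n ≠ 0) (x : ℂ) :
    x ^ (n⁻¹ : ℂ) ∈ principalSector n := by
  have hn' : (0 : ℝ) < n := by positivity
  obtain ⟨hlo, hhi⟩ := arg_mem_Ioc x
  change arg (x ^ (n⁻¹ : ℂ)) ∈ Set.Ioc _ _
  rw [arg_cpow_natCast_inv hn, ← neg_div]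
  exact ⟨div_lt_div_of_pos_right hlo hn', div_le_div_of_nonneg_right hhi hn'.le⟩

theorem abs_arg_le_of_mem_principalSector_of_notMem {x y : ℂ} (hx : x ∈ principalSector n)
    (hy : y ∉ principalSector n) : |arg x| ≤ |arg y| := by
  obtain ⟨hlo, hhi⟩ := hx
  simp only [principalSector, Set.mem_ofPred_eq, Set.mem_Ioc, not_and_or, not_lt, not_le] at hy
  have hx : |arg x| ≤ Real.pi / n := abs_le.mpr ⟨hlo.le, hhi⟩
  rcases hy with hy | hy
  · exact hx.trans ((le_neg_of_le_neg hy).trans (neg_le_abs _))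
  · exact hx.trans (hy.le.trans (le_abs_self _))

theorem sq_norm_sub_one (w : ℂ) : ‖w - 1‖ ^ 2 = ‖w‖ ^ 2 + 1 - 2 * ‖w‖ * Real.cos (arg w) := by
  have h := Real.sin_sq_add_cos_sq (arg w)
  rw [Complex.sq_norm, normSq_apply, sub_re, one_re, sub_im, one_im, sub_zero,
    ← norm_mul_cos_arg w, ← norm_mul_sin_arg w]
  linear_combination ‖w‖ ^ 2 * h

theorem norm_sub_one_le_of_abs_arg_le {w w' : ℂ} (hnorm : ‖w‖ = ‖w'‖)
    (harg : |arg w| ≤ |arg w'|) : ‖w - 1‖ ≤ ‖w' - 1‖ := by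
  have hcos : Real.cos (arg w') ≤ Real.cos (arg w) := by
    rw [← Real.cos_abs (arg w), ← Real.cos_abs (arg w')]
    exact Real.cos_le_cos_of_nonneg_of_le_pi (abs_nonneg _) (abs_le.mpr
      ⟨(neg_pi_lt_arg w').le, arg_le_pi w'⟩) harg
  refine (pow_le_pow_iff_left₀ (norm_nonneg _) (norm_nonneg _) two_ne_zero).mp ?_
  rw [sq_norm_sub_one, sq_norm_sub_one, hnorm]
  nlinarith [norm_nonneg w']

theorem norm_sub_eq_norm_mul_inv_sub_one (z : ℂ) {ω : ℂ} (hω : ‖ω‖ = 1) :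
    ‖z - ω‖ = ‖z * ω⁻¹ - 1‖ := by
  have hω0 : ω ≠ 0 := norm_ne_zero_iff.mp (by rw [hω]; exact one_ne_zero)
  rw [← one_mul ‖z * ω⁻¹ - 1‖, ← hω, ← norm_mul, mul_sub, mul_one, mul_left_comm,
    mul_inv_cancel₀ hω0, mul_one]

end Complex

/-- For an integer `r ≥ 1` and a nonzero complex number `z`, there is
exactly one `r`-th root of unity `ω` with `arg (z·ω⁻¹) ∈ (−π/r, π/r]`; moreover any such
`ω` minimizes `|z − ω'|` over all `r`-th roots of unity `ω'`. -/
theorem related_root_existsUnique_and_minimizes (r : ℕ) (hr : 1 ≤ r) (z : ℂ) (hz : z ≠ 0) :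
    (∃! ω : ℂ, ω ^ r = 1 ∧
      (z * ω⁻¹).arg ∈ Set.Ioc (-(Real.pi / r)) (Real.pi / r)) ∧
    ∀ ω : ℂ, (ω ^ r = 1 ∧ (z * ω⁻¹).arg ∈ Set.Ioc (-(Real.pi / r)) (Real.pi / r)) →
      ∀ ω' : ℂ, ω' ^ r = 1 → ‖z - ω‖ ≤ ‖z - ω'‖ := by
  have hr0 : r ≠ 0 := by omega
  have hpow {ω : ℂ} (hω : ω ^ r = 1) : (z * ω⁻¹) ^ r = z ^ r := by
    rw [mul_pow, inv_pow, hω, inv_one, mul_one]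
  have huniq {ω₁ ω₂ : ℂ} (h₁ : ω₁ ^ r = 1) (h₂ : ω₂ ^ r = 1) (hs₁ : z * ω₁⁻¹ ∈ principalSector r)
      (hs₂ : z * ω₂⁻¹ ∈ principalSector r) : ω₁ = ω₂ :=
    inv_injective <| mul_left_cancel₀ hz <|
      injOn_pow_principalSector hr0 hs₁ hs₂ (by simp only [hpow h₁, hpow h₂])
  set w := (z ^ r) ^ ((r : ℂ)⁻¹)
  have hroot : (z * w⁻¹) ^ r = 1 := by
    rw [mul_pow, inv_pow, cpow_nat_inv_pow _ hr0, mul_inv_cancel₀ (pow_ne_zero r hz)]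
  have hsector : z * (z * w⁻¹)⁻¹ ∈ principalSector r := by
    rw [mul_inv, inv_inv, ← mul_assoc, mul_inv_cancel₀ hz, one_mul]
    exact cpow_natCast_inv_mem_principalSector hr0 _
  refine ⟨⟨z * w⁻¹, ⟨hroot, hsector⟩, fun ω hω => huniq hω.1 hroot hω.2 hsector⟩, ?_⟩
  rintro ω ⟨hω, hs⟩ ω' hω'
  obtain rfl | hne := eq_or_ne ω' ω
  · rfl
  have hnorm {ω : ℂ} (hω : ω ^ r = 1) : ‖ω‖ = 1 := norm_eq_one_of_pow_eq_one hω hr0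
  rw [norm_sub_eq_norm_mul_inv_sub_one z (hnorm hω),
    norm_sub_eq_norm_mul_inv_sub_one z (hnorm hω')]
  refine norm_sub_one_le_of_abs_arg_le (by simp only [norm_mul, norm_inv, hnorm hω, hnorm hω'])
    (abs_arg_le_of_mem_principalSector_of_notMem hs fun hs' => hne (huniq hω' hω hs' hs))
end

section
/- Let r ≥ 1 be an integer and let u, v be nonzero complex numbers such that μ := (v/u)^r is a negative real number. If ω is an r-th root of unity related to the pair (u,v), then u/v = |μ|^{-1/r}·e^{iπ/r}·ω, i.e., u/v = |u/v|·e^{iπ/r}·ω. -/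
/-! Put `z = (u/v)·ω⁻¹`. Then `z^r = μ⁻¹` is a negative real, so `arg (z^r) = π`; relatedness puts
`r · arg z` in `(−π, π]`, where it coincides with `arg (z^r)`. Hence `arg z = π/r`, and `|z| = |u/v|`
because `|ω| = 1`. -/

open Complex

open scoped Real

namespace Complex

theorem arg_pow_of_arg_mem_Ioc {z : ℂ} {n : ℕ} (h : arg z ∈ Set.Ioc (-(π / n)) (π / n)) :
    arg (z ^ n) = n * arg z := by
  have hn : (0 : ℝ) < n := by
    rcases Nat.eq_zero_or_pos n with rfl | hn
    · simp at h
    · exact_mod_cast hn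
  rw [arg_coe_angle_eq_iff_eq_toReal.mp (arg_pow_coe_angle z n), ← Real.Angle.coe_nsmul,
    nsmul_eq_mul, Real.Angle.toReal_coe_eq_self_iff_mem_Ioc]
  constructor
  · calc -π = n * -(π / n) := by field_simp
      _ < n * arg z := by gcongr; exact h.1
  · calc n * arg z ≤ n * (π / n) := by gcongr; exact h.2
      _ = π := by field_simp

theorem arg_eq_pi_div_of_pow_eq_ofReal_of_neg {z : ℂ} {n : ℕ} {x : ℝ} (hx : x < 0)
    (hz : z ^ n = x) (h : arg z ∈ Set.Ioc (-(π / n)) (π / n)) : arg z = π / n := by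
  have hmul : n * arg z = π := by
    rw [← arg_pow_of_arg_mem_Ioc h, hz, arg_ofReal_of_neg hx]
  have hn : (n : ℝ) ≠ 0 := by
    rintro hn
    rw [hn, zero_mul] at hmul
    exact Real.pi_ne_zero hmul.symm
  rw [eq_div_iff hn, ← hmul, mul_comm]

end Complex

theorem rel_root_mu_neg_general (r : ℕ) (hr : 1 ≤ r) (u v : ℂ)
    (μ : ℂ) (hμ : μ = (v / u) ^ r) (hμneg : ∃ m : ℝ, m < 0 ∧ (m : ℂ) = μ)
    (ω : ℂ) (hω : ω ^ r = 1)
    (hrel : (u / v * ω⁻¹).arg ∈ Set.Ioc (-(Real.pi / r)) (Real.pi / r)) :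
    u / v = ((‖μ‖ ^ (-(1 / (r : ℝ))) : ℝ) : ℂ) *
        Complex.exp ((Real.pi : ℂ) * Complex.I / r) * ω ∧
    u / v = ((‖u / v‖ : ℝ) : ℂ) *
        Complex.exp ((Real.pi : ℂ) * Complex.I / r) * ω := by
  subst hμ
  obtain ⟨m, hm, hmμ⟩ := hμneg
  have hr0 : r ≠ 0 := by omega
  have hω1 : ‖ω‖ = 1 := norm_eq_one_of_pow_eq_one hω hr0
  have hω0 : ω ≠ 0 := norm_ne_zero_iff.mp (by simp [hω1])
  set z := u / v * ω⁻¹ with hz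
  have hzr : z ^ r = ((m⁻¹ : ℝ) : ℂ) := by
    rw [hz, mul_pow, inv_pow, hω, inv_one, mul_one, ← inv_div, inv_pow, ← hmμ, ofReal_inv]
  have harg : arg z = π / r := arg_eq_pi_div_of_pow_eq_ofReal_of_neg (inv_lt_zero.mpr hm) hzr hrel
  have hnorm : ‖z‖ = ‖u / v‖ := by simp [hz, hω1]
  have hpolar : u / v = ‖u / v‖ * exp (π * I / r) * ω := by
    rw [← hnorm, show (π : ℂ) * I / r = ((π / r : ℝ) : ℂ) * I by push_cast; ring, ← harg,
      norm_mul_exp_arg_mul_I, hz, inv_mul_cancel_right₀ hω0]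
  have hroot : ‖(v / u) ^ r‖ ^ (-(1 / (r : ℝ))) = ‖u / v‖ := by
    rw [norm_pow, one_div, Real.rpow_neg (by positivity),
      Real.pow_rpow_inv_natCast (norm_nonneg _) hr0, ← norm_inv, inv_div]
  exact ⟨hroot ▸ hpolar, hpolar⟩

/-- Let `r ≥ 1` and let `u, v` be nonzero complex numbers such that
`μ := (v/u)^r` is a negative real number. If `ω` is an `r`-th root of unity related to the
pair `(u,v)` (i.e. `arg((u/v)·ω⁻¹) ∈ (−π/r, π/r]`), then `u/v = |μ|^{-1/r}·e^{iπ/r}·ω`,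
i.e. `u/v = |u/v|·e^{iπ/r}·ω`. -/
theorem rel_root_mu_neg (r : ℕ) (hr : 1 ≤ r) (u v : ℂ) (hu : u ≠ 0) (hv : v ≠ 0)
    (μ : ℂ) (hμ : μ = (v / u) ^ r) (hμneg : ∃ m : ℝ, m < 0 ∧ (m : ℂ) = μ)
    (ω : ℂ) (hω : ω ^ r = 1)
    (hrel : (u / v * ω⁻¹).arg ∈ Set.Ioc (-(Real.pi / r)) (Real.pi / r)) :
    u / v = ((‖μ‖ ^ (-(1 / (r : ℝ))) : ℝ) : ℂ) *
        Complex.exp ((Real.pi : ℂ) * Complex.I / r) * ω ∧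
    u / v = ((‖u / v‖ : ℝ) : ℂ) *
        Complex.exp ((Real.pi : ℂ) * Complex.I / r) * ω :=
  rel_root_mu_neg_general r hr u v μ hμ hμneg ω hω hrel
end

section
/- Let r ≥ 3 be an integer and let u, v be nonzero complex numbers with |u| = |v|. Let ω be the r-th root of unity related to the pair (u,v), let Z = max(|u|,|v|) and ζ = |u^r − v^r|/Z^r. Then |u/v − ω| ≤ (π/(2r))·ζ; in particular |u/v − ω| ≤ ζ = (Z/|v|)·ζ. -/
open Complex

/-- Write `z = exp (θ I)` with `|θ| ≤ π / r`: then `‖z - 1‖ ≤ |θ|`, while Jordan's inequality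
gives `‖z ^ r - 1‖ = 2 |sin (r θ / 2)| ≥ (2 / π) r |θ|`. -/
theorem norm_sub_one_le_mul_norm_pow_sub_one {z : ℂ} (hz : ‖z‖ = 1) {r : ℕ} (hr : 0 < r)
    (harg : |z.arg| ≤ Real.pi / r) :
    ‖z - 1‖ ≤ Real.pi / (2 * r) * ‖z ^ r - 1‖ := by
  set θ := z.arg
  have hrpos : (0 : ℝ) < r := by exact_mod_cast hr
  have hz_exp : z = exp (I * θ) := by
    simpa [hz, mul_comm] using (norm_mul_exp_arg_mul_I z).symm
  have hzr_exp : z ^ r = exp (I * ((r * θ : ℝ) : ℂ)) := by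
    rw [hz_exp, ← exp_nat_mul]; push_cast; ring_nf
  have h_half : |r * θ / 2| ≤ Real.pi / 2 := by
    rw [abs_div, abs_mul, Nat.abs_cast, abs_two]
    have := mul_le_mul_of_nonneg_left harg hrpos.le
    rw [mul_div_cancel₀ _ hrpos.ne'] at this
    linarith
  have h_jordan : 2 / Real.pi * (r * |θ|) ≤ ‖z ^ r - 1‖ := by
    rw [hzr_exp, norm_exp_I_mul_ofReal_sub_one, norm_mul, Real.norm_eq_abs,
      Real.norm_eq_abs, abs_two]
    have := Real.mul_abs_le_abs_sin h_half
    rw [abs_div, abs_mul, Nat.abs_cast, abs_two] at this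
    linarith
  calc ‖z - 1‖ ≤ |θ| := by rw [hz_exp]; exact Real.norm_exp_I_mul_ofReal_sub_one_le
    _ = Real.pi / (2 * r) * (2 / Real.pi * (r * |θ|)) := by field_simp
    _ ≤ Real.pi / (2 * r) * ‖z ^ r - 1‖ := by gcongr

theorem rel_root_close_abs_eq_general (r : ℕ) (hr : 3 ≤ r) (u v : ℂ) (hv : v ≠ 0)
    (habs : ‖u‖ = ‖v‖)
    (ω : ℂ) (hω : ω ^ r = 1)
    (hrel : (u / v * ω⁻¹).arg ∈ Set.Ioc (-(Real.pi / r)) (Real.pi / r))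
    (Z ζ : ℝ) (hZ : Z = max ‖u‖ ‖v‖)
    (hζ : ζ = ‖u ^ r - v ^ r‖ / Z ^ r) :
    ‖u / v - ω‖ ≤ Real.pi / (2 * r) * ζ ∧
    ‖u / v - ω‖ ≤ ζ ∧ ζ = Z / ‖v‖ * ζ := by
  set z := u / v * ω⁻¹
  have hv_norm : 0 < ‖v‖ := norm_pos_iff.mpr hv
  have hZv : Z = ‖v‖ := by rw [hZ, habs, max_self]
  have hω_norm : ‖ω‖ = 1 := norm_eq_one_of_pow_eq_one hω (by omega)
  have hω0 : ω ≠ 0 := norm_ne_zero_iff.mp (by rw [hω_norm]; exact one_ne_zero)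
  have hz_norm : ‖z‖ = 1 := by
    rw [norm_mul, norm_div, habs, norm_inv, hω_norm, div_self hv_norm.ne', inv_one, one_mul]
  have h_left : ‖u / v - ω‖ = ‖z - 1‖ := by
    rw [show u / v - ω = ω * (z - 1) by simp only [z]; field_simp, norm_mul, hω_norm, one_mul]
  have h_zeta : ζ = ‖z ^ r - 1‖ := by
    rw [hζ, hZv, mul_pow, inv_pow, hω, inv_one, mul_one, div_pow, ← norm_pow,
      ← norm_div, sub_div, div_self (pow_ne_zero r hv)]
  have h_main : ‖u / v - ω‖ ≤ Real.pi / (2 * r) * ζ := by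
    rw [h_left, h_zeta]
    exact norm_sub_one_le_mul_norm_pow_sub_one hz_norm (by omega)
      (abs_le.mpr ⟨hrel.1.le, hrel.2⟩)
  have h_coef : Real.pi / (2 * r) ≤ 1 := by
    rw [div_le_one (by positivity)]
    have : (3 : ℝ) ≤ r := by exact_mod_cast hr
    linarith [Real.pi_le_four]
  refine ⟨h_main, h_main.trans ?_, ?_⟩
  · exact mul_le_of_le_one_left (h_zeta ▸ norm_nonneg _) h_coef
  · rw [hZv, div_self hv_norm.ne', one_mul]

/-- Let `r ≥ 3` and let `u, v` be nonzero complex numbers with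
`|u| = |v|`. Let `ω` be the `r`-th root of unity related to `(u,v)`, let
`Z = max(|u|,|v|)` and `ζ = |u^r − v^r|/Z^r`. Then `|u/v − ω| ≤ (π/(2r))·ζ`;
in particular `|u/v − ω| ≤ ζ = (Z/|v|)·ζ`. -/
theorem rel_root_close_abs_eq (r : ℕ) (hr : 3 ≤ r) (u v : ℂ) (hu : u ≠ 0) (hv : v ≠ 0)
    (habs : ‖u‖ = ‖v‖)
    (ω : ℂ) (hω : ω ^ r = 1)
    (hrel : (u / v * ω⁻¹).arg ∈ Set.Ioc (-(Real.pi / r)) (Real.pi / r))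
    (Z ζ : ℝ) (hZ : Z = max ‖u‖ ‖v‖)
    (hζ : ζ = ‖u ^ r - v ^ r‖ / Z ^ r) :
    ‖u / v - ω‖ ≤ Real.pi / (2 * r) * ζ ∧
    ‖u / v - ω‖ ≤ ζ ∧ ζ = Z / ‖v‖ * ζ :=
  rel_root_close_abs_eq_general r hr u v hv habs ω hω hrel Z ζ hZ hζ
end

section
/- Let r ≥ 1 be an integer and let u, v be nonzero complex numbers such that (v/u)^r is a positive real number. Let ω be the r-th root of unity related to the pair (u,v), let Z = max(|u|,|v|) and ζ = |u^r − v^r|/Z^r. Then |u/v − ω| ≤ (Z/|v|)·ζ. -/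
open Complex

/- Rotating by `ω⁻¹`, the hypotheses say that `z = (u/v)·ω⁻¹` has a positive real `r`-th power and
argument in `(-π/r, π/r]`, which forces `z` to be a nonnegative real `t`. Then `u/v = t·ω` and,
after dividing by `v`, the claim becomes the real inequality
`|t - 1|·max(t,1)^r ≤ max(t,1)·|t^r - 1|`. -/

theorem abs_sub_one_mul_max_pow_le {t : ℝ} (ht : 0 ≤ t) {r : ℕ} (hr : r ≠ 0) :
    |t - 1| * max t 1 ^ r ≤ max t 1 * |t ^ r - 1| := by
  rcases le_total t 1 with h | h
  · have htr : t ^ r ≤ t := pow_le_of_le_one ht h hr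
    have htr1 : t ^ r ≤ 1 := pow_le_one₀ ht h
    rw [max_eq_right h, one_pow, one_mul, mul_one, abs_sub_comm, abs_of_nonneg (by linarith),
      abs_sub_comm, abs_of_nonneg (by linarith)]
    linarith
  · have htr : t ≤ t ^ r := le_self_pow₀ h hr
    rw [max_eq_left h, abs_of_nonneg (by linarith), abs_of_nonneg (by linarith)]
    linarith

theorem Complex.arg_eq_zero_of_arg_pow_eq_zero {z : ℂ} {r : ℕ} (hr : r ≠ 0)
    (hz : z.arg ∈ Set.Ioc (-(Real.pi / r)) (Real.pi / r)) (hzr : (z ^ r).arg = 0) :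
    z.arg = 0 := by
  have hmul : (r • (z.arg : Real.Angle)).toReal = r * z.arg := by
    conv_rhs => rw [← arg_coe_angle_toReal_eq_arg z]
    rw [Real.Angle.nsmul_toReal_eq_mul hr, arg_coe_angle_toReal_eq_arg, neg_div]
    exact hz
  rw [← arg_pow_coe_angle, arg_coe_angle_toReal_eq_arg, hzr] at hmul
  exact (mul_eq_zero.mp hmul.symm).resolve_left (Nat.cast_ne_zero.mpr hr)

theorem max_norm_div_mul_norm_pow_sub_pow_div {K : Type*} [NormedField K] {u v : K} (hv : v ≠ 0)
    (r : ℕ) :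
    max ‖u‖ ‖v‖ / ‖v‖ * (‖u ^ r - v ^ r‖ / max ‖u‖ ‖v‖ ^ r) =
      max ‖u / v‖ 1 * ‖(u / v) ^ r - 1‖ / max ‖u / v‖ 1 ^ r := by
  have hv' : ‖v‖ ≠ 0 := norm_ne_zero_iff.mpr hv
  have hmax : max ‖u‖ ‖v‖ = max ‖u / v‖ 1 * ‖v‖ := by
    rw [max_mul_of_nonneg _ _ (norm_nonneg v), norm_div, div_mul_cancel₀ _ hv', one_mul]
  have hsub : u ^ r - v ^ r = ((u / v) ^ r - 1) * v ^ r := by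
    rw [sub_mul, div_pow, div_mul_cancel₀ _ (pow_ne_zero r hv), one_mul]
  have hM : max ‖u / v‖ 1 ≠ 0 := (lt_max_of_lt_right one_pos).ne'
  rw [hmax, hsub, norm_mul, norm_pow, mul_pow]
  field_simp

theorem norm_ofReal_mul_sub_le {ω : ℂ} {r : ℕ} (hr : r ≠ 0) (hω : ω ^ r = 1) {t : ℝ}
    (ht : 0 ≤ t) :
    ‖t * ω - ω‖ ≤ max ‖(t : ℂ) * ω‖ 1 * ‖((t : ℂ) * ω) ^ r - 1‖ / max ‖(t : ℂ) * ω‖ 1 ^ r := by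
  have hω1 : ‖ω‖ = 1 := norm_eq_one_of_pow_eq_one hω hr
  have hlhs : (t : ℂ) * ω - ω = ((t - 1 : ℝ) : ℂ) * ω := by push_cast; ring
  have hpow : ((t : ℂ) * ω) ^ r - 1 = ((t ^ r - 1 : ℝ) : ℂ) := by
    rw [mul_pow, hω, mul_one]; push_cast; ring
  rw [hlhs, hpow, norm_mul, norm_mul, hω1, mul_one, mul_one, norm_real, norm_real, norm_real,
    Real.norm_of_nonneg ht, Real.norm_eq_abs, Real.norm_eq_abs,
    le_div_iff₀ (pow_pos (lt_max_of_lt_right one_pos) r)]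
  exact abs_sub_one_mul_max_pow_le ht hr

theorem rel_root_close_mu_pos_general (r : ℕ) (hr : 1 ≤ r) (u v : ℂ) (hv : v ≠ 0)
    (hμpos : ∃ m : ℝ, 0 < m ∧ (m : ℂ) = (v / u) ^ r)
    (ω : ℂ) (hω : ω ^ r = 1)
    (hrel : (u / v * ω⁻¹).arg ∈ Set.Ioc (-(Real.pi / r)) (Real.pi / r))
    (Z ζ : ℝ) (hZ : Z = max ‖u‖ ‖v‖)
    (hζ : ζ = ‖u ^ r - v ^ r‖ / Z ^ r) :
    ‖u / v - ω‖ ≤ Z / ‖v‖ * ζ := by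
  obtain ⟨m, hm, hmr⟩ := hμpos
  have hr0 : r ≠ 0 := Nat.one_le_iff_ne_zero.mp hr
  have hω0 : ω ≠ 0 := by rintro rfl; simp [hr0] at hω
  set z := u / v * ω⁻¹
  have hzr : z ^ r = ((m⁻¹ : ℝ) : ℂ) := by
    rw [mul_pow, inv_pow, hω, inv_one, mul_one, ofReal_inv, hmr, ← inv_pow, inv_div]
  have hz : z.arg = 0 :=
    arg_eq_zero_of_arg_pow_eq_zero hr0 hrel (hzr ▸ arg_ofReal_of_nonneg (inv_pos.mpr hm).le)
  obtain ⟨hre, him⟩ := arg_eq_zero_iff.mp hz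
  have hz_re : z = z.re := Complex.ext (by simp) (by simp [him])
  have huv : u / v = z.re * ω := by
    rw [← hz_re, mul_assoc, inv_mul_cancel₀ hω0, mul_one]
  subst hZ hζ
  rw [max_norm_div_mul_norm_pow_sub_pow_div hv, huv]
  exact norm_ofReal_mul_sub_le hr0 hω hre

/-- Let `r ≥ 1` and let `u, v` be nonzero complex numbers such that
`(v/u)^r` is a positive real number. Let `ω` be the `r`-th root of unity related to
`(u,v)`, let `Z = max(|u|,|v|)` and `ζ = |u^r − v^r|/Z^r`. Then
`|u/v − ω| ≤ (Z/|v|)·ζ`. -/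
theorem rel_root_close_mu_pos (r : ℕ) (hr : 1 ≤ r) (u v : ℂ) (hu : u ≠ 0) (hv : v ≠ 0)
    (hμpos : ∃ m : ℝ, 0 < m ∧ (m : ℂ) = (v / u) ^ r)
    (ω : ℂ) (hω : ω ^ r = 1)
    (hrel : (u / v * ω⁻¹).arg ∈ Set.Ioc (-(Real.pi / r)) (Real.pi / r))
    (Z ζ : ℝ) (hZ : Z = max ‖u‖ ‖v‖)
    (hζ : ζ = ‖u ^ r - v ^ r‖ / Z ^ r) :
    ‖u / v - ω‖ ≤ Z / ‖v‖ * ζ :=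
  rel_root_close_mu_pos_general r hr u v hv hμpos ω hω hrel Z ζ hZ hζ
end

section
/- Let r ≥ 1 be an integer, let ω be an r-th root of unity, and let u', v', u, v be nonzero complex numbers such that (v'/u')^r and (v/u)^r are real, and ω is related both to the pair (u',v') and to the pair (u,v). Set Z' = max(|u'|,|v'|), Z = max(|u|,|v|), ζ' = |u'^r − v'^r|/Z'^r and ζ = |u^r − v^r|/Z^r. If ζ ≤ ζ' and ζ < 1, then |u'·v − u·v'| ≤ 2·Z'·Z·ζ'. -/
/-!
If `ζ' ≥ 1` the bound is the triangle inequality `‖u'v - uv'‖ ≤ 2 Z' Z`. Otherwise `ζ, ζ' < 1`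
forces the real numbers `(u/v)^r` and `(u'/v')^r` to be positive, and relatedness then puts
`u/v` and `u'/v'` on the open ray through `ω`: `u = |u| ω c`, `v = |v| c` with `|c| = 1`, and
likewise for the primed pair. This reduces everything to the moduli `a = |u|`, `b = |v|`,
`a'`, `b'`, for which `ζ = 1 - (min a b / max a b)^r`. So `ζ ≤ ζ'` says that the ratio
`min/max` of the unprimed pair is at least that of the primed pair, which gives
`|a'b - ab'| ≤ 2 max(a,b) (max(a',b') - min(a',b')) ≤ 2 Z Z' ζ'`.
-/

open scoped ComplexOrder

section RealInequality

variable {r : ℕ} {a b a' b' : ℝ}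

theorem abs_pow_sub_pow_eq_max_pow_sub_min_pow (ha : 0 ≤ a) (hb : 0 ≤ b) :
    |a ^ r - b ^ r| = max a b ^ r - min a b ^ r := by
  rcases le_total a b with hab | hab
  · rw [abs_of_nonpos (sub_nonpos.mpr (pow_le_pow_left₀ ha hab r)), max_eq_right hab,
      min_eq_left hab, neg_sub]
  · rw [abs_of_nonneg (sub_nonneg.mpr (pow_le_pow_left₀ hb hab r)), max_eq_left hab,
      min_eq_right hab]

theorem abs_pow_sub_pow_div_max_pow (ha : 0 ≤ a) (hb : 0 ≤ b) (hM : 0 < max a b) :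
    |a ^ r - b ^ r| / max a b ^ r = 1 - (min a b / max a b) ^ r := by
  rw [abs_pow_sub_pow_eq_max_pow_sub_min_pow ha hb, div_pow, sub_div, div_self (by positivity)]

theorem abs_mul_sub_mul_le_of_min_mul_max_le (ha : 0 ≤ a) (hb : 0 ≤ b) (ha' : 0 ≤ a')
    (hb' : 0 ≤ b') (h : min a' b' * max a b ≤ min a b * max a' b') :
    |a' * b - a * b'| ≤ 2 * max a b * (max a' b' - min a' b') := by
  wlog hba : b ≤ a generalizing a b a' b'
  · have := this hb ha hb' ha' (by rwa [min_comm, max_comm, min_comm b, max_comm b']) (by linarith)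
    rwa [abs_sub_comm, max_comm, max_comm b', min_comm b', mul_comm b', mul_comm b] at this
  rw [max_eq_left hba, min_eq_right hba] at h
  rw [max_eq_left hba, abs_le]
  rcases le_total b' a' with hba' | hab'
  · rw [max_eq_left hba', min_eq_right hba'] at h ⊢
    constructor <;> nlinarith
  · rw [max_eq_right hab', min_eq_left hab'] at h ⊢
    constructor <;> nlinarith

theorem abs_mul_sub_mul_le (hr : r ≠ 0) (ha : 0 ≤ a) (hb : 0 ≤ b) (ha' : 0 ≤ a') (hb' : 0 ≤ b')
    (hM : 0 < max a b) (hM' : 0 < max a' b')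
    (h : |a ^ r - b ^ r| / max a b ^ r ≤ |a' ^ r - b' ^ r| / max a' b' ^ r) :
    |a' * b - a * b'| ≤ 2 * max a' b' * max a b * (|a' ^ r - b' ^ r| / max a' b' ^ r) := by
  rw [abs_pow_sub_pow_div_max_pow ha hb hM, abs_pow_sub_pow_div_max_pow ha' hb' hM'] at h
  rw [abs_pow_sub_pow_div_max_pow ha' hb' hM']
  set q' := min a' b' / max a' b'
  have hq'_nonneg : 0 ≤ q' := by positivity
  have hq'_le_one : q' ≤ 1 := div_le_one_of_le₀ min_le_max hM'.le
  have hq : q' ≤ min a b / max a b :=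
    (pow_le_pow_iff_left₀ hq'_nonneg (by positivity) hr).mp (by linarith)
  have hmin : min a' b' * max a b ≤ min a b * max a' b' := by
    rwa [div_le_div_iff₀ hM' hM] at hq
  have hgap : max a' b' - min a' b' ≤ max a' b' * (1 - q' ^ r) := by
    have : max a' b' * q' = min a' b' := mul_div_cancel₀ _ hM'.ne'
    nlinarith [pow_le_of_le_one hq'_nonneg hq'_le_one hr]
  calc |a' * b - a * b'| ≤ 2 * max a b * (max a' b' - min a' b') :=
        abs_mul_sub_mul_le_of_min_mul_max_le ha hb ha' hb' hmin
    _ ≤ 2 * max a b * (max a' b' * (1 - q' ^ r)) := by gcongr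
    _ = 2 * max a' b' * max a b * (1 - q' ^ r) := by ring

end RealInequality

namespace Complex

theorem norm_mul_sub_mul_le (u v u' v' : ℂ) :
    ‖u' * v - u * v'‖ ≤ 2 * max ‖u'‖ ‖v'‖ * max ‖u‖ ‖v‖ := by
  have h₁ : ‖u'‖ * ‖v‖ ≤ max ‖u'‖ ‖v'‖ * max ‖u‖ ‖v‖ :=
    mul_le_mul (le_max_left _ _) (le_max_right _ _) (norm_nonneg _) (by positivity)
  have h₂ : ‖u‖ * ‖v'‖ ≤ max ‖u'‖ ‖v'‖ * max ‖u‖ ‖v‖ := by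
    rw [mul_comm]
    exact mul_le_mul (le_max_right _ _) (le_max_left _ _) (norm_nonneg _) (by positivity)
  calc ‖u' * v - u * v'‖ ≤ ‖u'‖ * ‖v‖ + ‖u‖ * ‖v'‖ := by
        simpa only [norm_mul] using norm_sub_le (u' * v) (u * v')
    _ ≤ 2 * max ‖u'‖ ‖v'‖ * max ‖u‖ ‖v‖ := by linarith

theorem arg_eq_zero_of_arg_pow_eq_zero_s5 {r : ℕ} (hr : 0 < r) {z : ℂ}
    (harg : z.arg ∈ Set.Ioc (-(Real.pi / r)) (Real.pi / r)) (h : (z ^ r).arg = 0) :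
    z.arg = 0 := by
  have hr' : (0 : ℝ) < r := Nat.cast_pos.mpr hr
  have hmem : (r : ℝ) * z.arg ∈ Set.Ioc (-Real.pi) Real.pi := by
    obtain ⟨h₁, h₂⟩ := harg
    rw [← neg_div, div_lt_iff₀' hr'] at h₁
    rw [le_div_iff₀' hr'] at h₂
    exact ⟨h₁, h₂⟩
  have : (((r : ℝ) * z.arg : ℝ) : Real.Angle) = 0 := by
    rw [Real.Angle.natCast_mul_eq_nsmul, ← arg_pow_coe_angle, h, Real.Angle.coe_zero]
  have := congrArg Real.Angle.toReal this
  rw [Real.Angle.toReal_coe_eq_self_iff_mem_Ioc.mpr hmem, Real.Angle.toReal_zero] at this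
  exact (mul_eq_zero.mp this).resolve_left hr'.ne'

theorem ne_zero_of_norm_pow_sub_pow_lt {r : ℕ} (hr : r ≠ 0) {u v : ℂ}
    (h : ‖u ^ r - v ^ r‖ < max ‖u‖ ‖v‖ ^ r) : v ≠ 0 := by
  rintro rfl
  simp [zero_pow hr] at h

theorem zero_le_div_pow_of_norm_pow_sub_pow_lt {r : ℕ} (hr : r ≠ 0) {u v : ℂ}
    (him : ((u / v) ^ r).im = 0) (h : ‖u ^ r - v ^ r‖ < max ‖u‖ ‖v‖ ^ r) : 0 ≤ (u / v) ^ r := by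
  have hv : v ≠ 0 := ne_zero_of_norm_pow_sub_pow_lt hr h
  set t := ((u / v) ^ r).re
  have ht : (u / v) ^ r = t := ext rfl him
  have hu : u ^ r = t * v ^ r := by rwa [div_pow, div_eq_iff (pow_ne_zero _ hv)] at ht
  rw [ht, zero_le_real]
  by_contra! htneg
  have hnorm_u : ‖u‖ ^ r = -t * ‖v‖ ^ r := by
    rw [← norm_pow, hu, norm_mul, norm_real, Real.norm_of_nonpos htneg.le, norm_pow]
  have hnorm_sub : ‖u ^ r - v ^ r‖ = ‖u‖ ^ r + ‖v‖ ^ r := by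
    rw [hu, ← sub_one_mul, norm_mul, ← ofReal_one, ← ofReal_sub, norm_real,
      Real.norm_of_nonpos (by linarith), norm_pow, hnorm_u]
    ring
  rcases le_total ‖u‖ ‖v‖ with huv | hvu
  · rw [max_eq_right huv, hnorm_sub] at h
    linarith [pow_nonneg (norm_nonneg u) r]
  · rw [max_eq_left hvu, hnorm_sub] at h
    linarith [pow_nonneg (norm_nonneg v) r]

theorem exists_eq_norm_mul_of_arg_mem {r : ℕ} (hr : 0 < r) {ω u v : ℂ} (hω : ω ^ r = 1)
    (hreal : ((v / u) ^ r).im = 0)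
    (hrel : (u / v * ω⁻¹).arg ∈ Set.Ioc (-(Real.pi / r)) (Real.pi / r))
    (h : ‖u ^ r - v ^ r‖ < max ‖u‖ ‖v‖ ^ r) :
    ∃ c : ℂ, ‖c‖ = 1 ∧ u = ‖u‖ * ω * c ∧ v = ‖v‖ * c := by
  have hv : v ≠ 0 := ne_zero_of_norm_pow_sub_pow_lt hr.ne' h
  have hω₁ : ‖ω‖ = 1 := norm_eq_one_of_pow_eq_one hω hr.ne'
  have hpow : (u / v * ω⁻¹) ^ r = (u / v) ^ r := by rw [mul_pow, inv_pow, hω, inv_one, mul_one]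
  have him : ((u / v) ^ r).im = 0 := by rw [← inv_div, inv_pow, inv_im, hreal, neg_zero, zero_div]
  have harg : (u / v * ω⁻¹).arg = 0 := by
    refine arg_eq_zero_of_arg_pow_eq_zero_s5 hr hrel ?_
    rw [hpow, arg_eq_zero_iff_zero_le]
    exact zero_le_div_pow_of_norm_pow_sub_pow_lt hr.ne' him h
  have hratio : u / v * ω⁻¹ = ‖u‖ / ‖v‖ := by
    rw [eq_coe_norm_of_nonneg (arg_eq_zero_iff_zero_le.mp harg)]
    simp [hω₁]
  have hω₀ : ω ≠ 0 := by rintro rfl; simp at hω₁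
  have hv₀ : (‖v‖ : ℂ) ≠ 0 := by simpa using hv
  refine ⟨v / ‖v‖, by simp [hv], ?_, by field_simp⟩
  field_simp at hratio ⊢
  linear_combination hratio

variable {r : ℕ} {ω c c' u v u' v' : ℂ}

theorem norm_mul_sub_mul_of_eq_norm_mul (hω : ‖ω‖ = 1) (hc : ‖c‖ = 1) (hc' : ‖c'‖ = 1)
    (hu : u = ‖u‖ * ω * c) (hv : v = ‖v‖ * c) (hu' : u' = ‖u'‖ * ω * c') (hv' : v' = ‖v'‖ * c') :
    ‖u' * v - u * v'‖ = |‖u'‖ * ‖v‖ - ‖u‖ * ‖v'‖| := by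
  have h : u' * v - u * v' = ω * c * c' * ((‖u'‖ * ‖v‖ - ‖u‖ * ‖v'‖ : ℝ) : ℂ) := by
    push_cast
    linear_combination v * hu' + ‖u'‖ * ω * c' * hv - v' * hu - ‖u‖ * ω * c * hv'
  rw [h, norm_mul, norm_mul, norm_mul, hω, hc, hc', norm_real, Real.norm_eq_abs, one_mul,
    one_mul, one_mul]

theorem norm_pow_sub_pow_of_eq_norm_mul (hω : ω ^ r = 1) (hc : ‖c‖ = 1)
    (hu : u = ‖u‖ * ω * c) (hv : v = ‖v‖ * c) :
    ‖u ^ r - v ^ r‖ = |‖u‖ ^ r - ‖v‖ ^ r| := by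
  have h : u ^ r - v ^ r = c ^ r * ((‖u‖ ^ r - ‖v‖ ^ r : ℝ) : ℂ) :=
    calc u ^ r - v ^ r = (‖u‖ * ω * c) ^ r - (‖v‖ * c) ^ r := by rw [← hu, ← hv]
      _ = c ^ r * ((‖u‖ ^ r - ‖v‖ ^ r : ℝ) : ℂ) := by
        rw [mul_pow, mul_pow, mul_pow, hω]
        push_cast
        ring
  rw [h, norm_mul, norm_pow, hc, one_pow, one_mul, norm_real, Real.norm_eq_abs]

end Complex

open Complex

theorem wronskian_bound_general (r : ℕ) (hr : 1 ≤ r) (ω : ℂ) (hω : ω ^ r = 1)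
    (u' v' u v : ℂ) (hu' : u' ≠ 0) (hu : u ≠ 0)
    (hreal' : ((v' / u') ^ r).im = 0) (hreal : ((v / u) ^ r).im = 0)
    (hrel' : (u' / v' * ω⁻¹).arg ∈ Set.Ioc (-(Real.pi / r)) (Real.pi / r))
    (hrel : (u / v * ω⁻¹).arg ∈ Set.Ioc (-(Real.pi / r)) (Real.pi / r))
    (Z' Z ζ' ζ : ℝ)
    (hZ' : Z' = max (‖u'‖) ‖v'‖)
    (hZ : Z = max ‖u‖ ‖v‖)
    (hζ' : ζ' = ‖u' ^ r - v' ^ r‖ / Z' ^ r)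
    (hζ : ζ = ‖u ^ r - v ^ r‖ / Z ^ r)
    (hle : ζ ≤ ζ') (hlt : ζ < 1) :
    ‖u' * v - u * v'‖ ≤ 2 * Z' * Z * ζ' := by
  subst hZ' hZ hζ' hζ
  have hM' : 0 < max ‖u'‖ ‖v'‖ := lt_max_of_lt_left (norm_pos_iff.mpr hu')
  have hM : 0 < max ‖u‖ ‖v‖ := lt_max_of_lt_left (norm_pos_iff.mpr hu)
  rcases le_or_gt 1 (‖u' ^ r - v' ^ r‖ / max ‖u'‖ ‖v'‖ ^ r) with hζ' | hζ'
  · exact (norm_mul_sub_mul_le u v u' v').trans (le_mul_of_one_le_right (by positivity) hζ')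
  have hr₀ : 0 < r := hr
  obtain ⟨c, hc, hu_eq, hv_eq⟩ :=
    exists_eq_norm_mul_of_arg_mem hr₀ hω hreal hrel ((div_lt_one (by positivity)).mp hlt)
  obtain ⟨c', hc', hu'_eq, hv'_eq⟩ :=
    exists_eq_norm_mul_of_arg_mem hr₀ hω hreal' hrel' ((div_lt_one (by positivity)).mp hζ')
  have hω₁ : ‖ω‖ = 1 := norm_eq_one_of_pow_eq_one hω hr₀.ne'
  rw [norm_pow_sub_pow_of_eq_norm_mul hω hc hu_eq hv_eq,
    norm_pow_sub_pow_of_eq_norm_mul hω hc' hu'_eq hv'_eq] at hle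
  rw [norm_pow_sub_pow_of_eq_norm_mul hω hc' hu'_eq hv'_eq,
    norm_mul_sub_mul_of_eq_norm_mul hω₁ hc hc' hu_eq hv_eq hu'_eq hv'_eq]
  exact abs_mul_sub_mul_le hr₀.ne' (norm_nonneg _) (norm_nonneg _) (norm_nonneg _)
    (norm_nonneg _) hM hM' hle

/-- Let `r ≥ 1`, let `ω` be an `r`-th root of unity, and let
`u', v', u, v` be nonzero complex numbers such that `(v'/u')^r` and `(v/u)^r` are real,
and `ω` is related both to `(u',v')` and to `(u,v)`. With `Z' = max(|u'|,|v'|)`,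
`Z = max(|u|,|v|)`, `ζ' = |u'^r − v'^r|/Z'^r`, `ζ = |u^r − v^r|/Z^r`, if `ζ ≤ ζ'` and
`ζ < 1` then `|u'·v − u·v'| ≤ 2·Z'·Z·ζ'`. -/
theorem wronskian_bound (r : ℕ) (hr : 1 ≤ r) (ω : ℂ) (hω : ω ^ r = 1)
    (u' v' u v : ℂ) (hu' : u' ≠ 0) (hv' : v' ≠ 0) (hu : u ≠ 0) (hv : v ≠ 0)
    (hreal' : ((v' / u') ^ r).im = 0) (hreal : ((v / u) ^ r).im = 0)
    (hrel' : (u' / v' * ω⁻¹).arg ∈ Set.Ioc (-(Real.pi / r)) (Real.pi / r))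
    (hrel : (u / v * ω⁻¹).arg ∈ Set.Ioc (-(Real.pi / r)) (Real.pi / r))
    (Z' Z ζ' ζ : ℝ)
    (hZ' : Z' = max (‖u'‖) ‖v'‖)
    (hZ : Z = max ‖u‖ ‖v‖)
    (hζ' : ζ' = ‖u' ^ r - v' ^ r‖ / Z' ^ r)
    (hζ : ζ = ‖u ^ r - v ^ r‖ / Z ^ r)
    (hle : ζ ≤ ζ') (hlt : ζ < 1) :
    ‖u' * v - u * v'‖ ≤ 2 * Z' * Z * ζ' :=
  wronskian_bound_general r hr ω hω u' v' u v hu' hu hreal' hreal hrel' hrel Z' Z ζ' ζ hZ' hZ hζ' hζ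
    hle hlt
end

section
/- Assume γ is the complex conjugate of α and δ is the complex conjugate of β (so v(x,y) is the complex conjugate of u(x,y) for every (x,y) ∈ ℤ²; this is the case D < 0), and let r ≥ 3. Let (x,y) and (x*,y*) be primitive solutions of 0 < |F(x,y)| ≤ h with (x*,y*) ∉ {(x,y), (−x,−y)}, both related to the same r-th root of unity ω, and suppose ζ(x*,y*) ≤ ζ(x,y). Then Z(x*,y*) ≥ |j|/(2·h^{1/r}). -/
open Complex

noncomputable section

/-- The linear form `αx + βy` evaluated at an integer pair. -/
def lin (α β : ℂ) (x y : ℤ) : ℂ := α * (x : ℂ) + β * (y : ℂ)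

/-- The diagonalizable binary form `F(x,y) = (αx+βy)^r − (γx+δy)^r`. -/
def form (α β γ δ : ℂ) (r : ℕ) (x y : ℤ) : ℂ := lin α β x y ^ r - lin γ δ x y ^ r

/-- `Z(x,y) = max(|u|,|v|)`. -/
def Zmax (α β γ δ : ℂ) (x y : ℤ) : ℝ :=
  max (‖lin α β x y‖) (‖lin γ δ x y‖)

/-- `ζ(x,y) = |F(x,y)| / Z(x,y)^r`. -/
def zetaF (α β γ δ : ℂ) (r : ℕ) (x y : ℤ) : ℝ :=
  ‖form α β γ δ r x y‖ / Zmax α β γ δ x y ^ r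

/-- `μ(x,y) = v^r / u^r`. -/
def muF (α β γ δ : ℂ) (r : ℕ) (x y : ℤ) : ℂ :=
  lin γ δ x y ^ r / lin α β x y ^ r

/-- `F` has integer coefficients: each coefficient
`binom(r,k)·(α^k β^{r−k} − γ^k δ^{r−k})` is a rational integer. -/
def IntCoeffs (α β γ δ : ℂ) (r : ℕ) : Prop :=
  ∀ k ≤ r, ∃ n : ℤ, (r.choose k : ℂ) * (α ^ k * β ^ (r - k) - γ ^ k * δ ^ (r - k)) = (n : ℂ)

/-- `(x,y)` is a primitive solution of the Thue inequality `0 < |F(x,y)| ≤ h`. -/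
def IsPrimSol (α β γ δ : ℂ) (r h : ℕ) (x y : ℤ) : Prop :=
  Int.gcd x y = 1 ∧ 0 < ‖form α β γ δ r x y‖ ∧
    ‖form α β γ δ r x y‖ ≤ (h : ℝ)

/-- The solution `(x,y)` is related to the `r`-th root of unity `ω`: the principal
argument of `(u/v)·ω⁻¹` lies in `(−π/r, π/r]`. -/
def RelatedTo (α β γ δ : ℂ) (r : ℕ) (ω : ℂ) (x y : ℤ) : Prop :=
  (lin α β x y / lin γ δ x y * ω⁻¹).arg ∈ Set.Ioc (-(Real.pi / r)) (Real.pi / r)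

/-!
With `v = ū`, the numbers `a = (u/ū)ω⁻¹` and `a* = (u*/ū*)ω⁻¹` lie on the unit circle, with
arguments `φ, φ*` in `(-π/r, π/r]`, and `ζ = |a^r - 1| = 2 sin (r|φ|/2)`. Hence `ζ* ≤ ζ` forces
`|φ*| ≤ |φ|`, so `|a - a*| ≤ |φ - φ*| ≤ 2|φ|`, and Jordan's inequality together with
`π^r ≤ 2 r^r` (this is where `r ≥ 3` enters) gives `(|a - a*|/2)^r ≤ ζ`. On the other hand
`u ū* - ū u* = j (x y* - y x*)` is a nonzero integer multiple of `j` for distinct primitive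
solutions, and its modulus is `|u| |u*| |a - a*|`. Therefore
`|j| ≤ Z* · |u| |a - a*| ≤ Z* · 2 (ζ |u|^r)^{1/r} = 2 Z* |F(x,y)|^{1/r} ≤ 2 Z* h^{1/r}`.
-/

open ComplexConjugate Real

theorem Int.eq_or_eq_neg_of_mul_sub_mul_eq_zero {x y x' y' : ℤ} (h : IsCoprime x y)
    (h' : IsCoprime x' y') (hcross : x * y' - y * x' = 0) :
    (x', y') = (x, y) ∨ (x', y') = (-x, -y) := by
  obtain ⟨p, q, hpq⟩ := h
  set k := p * x' + q * y'
  have hx' : x' = k * x := by linear_combination (-x') * hpq - q * hcross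
  have hy' : y' = k * y := by linear_combination (-y') * hpq + p * hcross
  have hk : IsUnit k := h'.isUnit_of_dvd' ⟨x, hx'⟩ ⟨y, hy'⟩
  rcases Int.isUnit_iff.1 hk with hk | hk <;> simp [hx', hy', hk]

theorem Real.pi_pow_le_two_mul_pow {r : ℕ} (hr : 3 ≤ r) : π ^ r ≤ 2 * (r : ℝ) ^ r := by
  induction r, hr using Nat.le_induction with
  | base =>
    have := pow_le_pow_left₀ pi_pos.le pi_lt_d2.le 3
    norm_num at this ⊢
    linarith
  | succ n hn ih =>
    have hπn : π ≤ (n : ℝ) + 1 := by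
      have : (3 : ℝ) ≤ n := by exact_mod_cast hn
      linarith [pi_lt_d2]
    push_cast
    calc π ^ (n + 1) = π ^ n * π := pow_succ π n
      _ ≤ 2 * (n : ℝ) ^ n * ((n : ℝ) + 1) := by gcongr
      _ ≤ 2 * ((n : ℝ) + 1) ^ n * ((n : ℝ) + 1) := by gcongr; linarith
      _ = 2 * ((n : ℝ) + 1) ^ (n + 1) := by ring

theorem Real.pow_le_two_mul_sin {r : ℕ} (hr : 3 ≤ r) {t : ℝ} (ht₀ : 0 ≤ t) (ht : t ≤ π / r) :
    t ^ r ≤ 2 * sin (r * t / 2) := by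
  have hrpos : (0 : ℝ) < r := by positivity
  have hrt : r * t ≤ π := by rwa [le_div_iff₀ hrpos, mul_comm] at ht
  have hjordan : 2 / π * (r * t / 2) ≤ sin (r * t / 2) := mul_le_sin (by positivity) (by linarith)
  have hpow : (π / r) ^ (r - 1) ≤ 2 * r / π := by
    rw [div_pow, div_le_div_iff₀ (by positivity) pi_pos, ← pow_succ, mul_assoc, ← pow_succ',
      Nat.sub_add_cancel (by omega)]
    exact pi_pow_le_two_mul_pow hr
  calc t ^ r = t ^ (r - 1) * t := by rw [← pow_succ, Nat.sub_add_cancel (by omega)]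
    _ ≤ (π / r) ^ (r - 1) * t := by gcongr
    _ ≤ 2 * r / π * t := by gcongr
    _ = 2 * (2 / π * (r * t / 2)) := by ring
    _ ≤ 2 * sin (r * t / 2) := by gcongr

namespace Complex

theorem exp_arg_mul_I_of_norm_eq_one {a : ℂ} (ha : ‖a‖ = 1) : exp (arg a * I) = a := by
  simpa [ha] using norm_mul_exp_arg_mul_I a

theorem norm_sub_le_abs_arg_sub {a b : ℂ} (ha : ‖a‖ = 1) (hb : ‖b‖ = 1) :
    ‖a - b‖ ≤ |arg a - arg b| := by
  have h : exp (arg a * I) - exp (arg b * I) =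
      exp (arg b * I) * (exp (I * ↑(arg a - arg b)) - 1) := by
    rw [mul_sub, mul_one, ← exp_add]
    push_cast
    ring_nf
  rw [exp_arg_mul_I_of_norm_eq_one ha, exp_arg_mul_I_of_norm_eq_one hb] at h
  rw [h, norm_mul, hb, one_mul]
  exact Real.norm_exp_I_mul_ofReal_sub_one_le

theorem norm_pow_sub_one_eq_two_mul_sin {a : ℂ} (ha : ‖a‖ = 1) {r : ℕ} (harg : |arg a| ≤ π / r) :
    ‖a ^ r - 1‖ = 2 * Real.sin (r * |arg a| / 2) := by
  have hpow : a ^ r = exp (I * ↑(r * arg a)) := by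
    conv_lhs => rw [← exp_arg_mul_I_of_norm_eq_one ha]
    rw [← exp_nat_mul]
    push_cast
    ring_nf
  have hbound : |r * arg a / 2| ≤ π := by
    rcases Nat.eq_zero_or_pos r with rfl | hr
    · simp [pi_nonneg]
    have : (r : ℝ) * |arg a| ≤ π := by rwa [le_div_iff₀ (by positivity), mul_comm] at harg
    rw [abs_div, abs_mul, Nat.abs_cast, abs_two]
    linarith [pi_pos]
  rw [hpow, norm_exp_I_mul_ofReal_sub_one, norm_mul, Real.norm_two, Real.norm_eq_abs,
    Real.abs_sin_eq_sin_abs_of_abs_le_pi hbound, abs_div, abs_mul, Nat.abs_cast, abs_two]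

theorem half_norm_sub_pow_le_norm_pow_sub_one {r : ℕ} (hr : 3 ≤ r) {a b : ℂ} (ha : ‖a‖ = 1)
    (hb : ‖b‖ = 1) (harg_a : |arg a| ≤ π / r) (harg_b : |arg b| ≤ π / r)
    (hle : ‖b ^ r - 1‖ ≤ ‖a ^ r - 1‖) : (‖a - b‖ / 2) ^ r ≤ ‖a ^ r - 1‖ := by
  have hrpos : (0 : ℝ) < r := by positivity
  have hhalf : ∀ {t : ℝ}, |t| ≤ π / r → r * |t| / 2 ∈ Set.Icc (-(π / 2)) (π / 2) :=
    fun {t} ht => by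
      have : r * |t| ≤ π := by rwa [le_div_iff₀ hrpos, mul_comm] at ht
      constructor <;> nlinarith [abs_nonneg t, pi_pos]
  rw [norm_pow_sub_one_eq_two_mul_sin ha harg_a, norm_pow_sub_one_eq_two_mul_sin hb harg_b] at hle
  rw [norm_pow_sub_one_eq_two_mul_sin ha harg_a]
  have hab : |arg b| ≤ |arg a| := by
    have := strictMonoOn_sin.le_iff_le (hhalf harg_b) (hhalf harg_a) |>.1 (by linarith)
    nlinarith
  calc (‖a - b‖ / 2) ^ r ≤ |arg a| ^ r := by
        gcongr
        linarith [norm_sub_le_abs_arg_sub ha hb, abs_sub (arg a) (arg b)]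
    _ ≤ 2 * Real.sin (r * |arg a| / 2) := pow_le_two_mul_sin hr (abs_nonneg _) harg_a

theorem norm_div_conj_mul_inv {u ω : ℂ} (hu : u ≠ 0) (hω : ‖ω‖ = 1) :
    ‖u / conj u * ω⁻¹‖ = 1 := by
  rw [norm_mul, norm_div, norm_conj, norm_inv, hω, div_self (norm_ne_zero_iff.2 hu), inv_one,
    mul_one]

theorem norm_div_conj_mul_inv_pow_sub_one {u ω : ℂ} {r : ℕ} (hu : u ≠ 0) (hω : ω ^ r = 1) :
    ‖(u / conj u * ω⁻¹) ^ r - 1‖ = ‖u ^ r - conj u ^ r‖ / ‖u‖ ^ r := by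
  have hu' : conj u ^ r ≠ 0 := pow_ne_zero _ ((map_ne_zero _).2 hu)
  rw [mul_pow, div_pow, inv_pow, hω, inv_one, mul_one, div_sub_one hu', norm_div, norm_pow,
    norm_conj]

theorem mul_conj_sub_conj_mul_eq {u w ω : ℂ} (hu : u ≠ 0) (hw : w ≠ 0) (hω : ω ≠ 0) :
    u * conj w - conj u * w = ω * conj u * conj w * (u / conj u * ω⁻¹ - w / conj w * ω⁻¹) := by
  have := (map_ne_zero conj).2 hu
  have := (map_ne_zero conj).2 hw
  field_simp

theorem norm_mul_conj_sub_conj_mul_pow_le {r : ℕ} (hr : 3 ≤ r) {ω u w : ℂ} (hω : ω ^ r = 1)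
    (hu : u ≠ 0) (hw : w ≠ 0) (harg_u : |arg (u / conj u * ω⁻¹)| ≤ π / r)
    (harg_w : |arg (w / conj w * ω⁻¹)| ≤ π / r)
    (hle : ‖w ^ r - conj w ^ r‖ / ‖w‖ ^ r ≤ ‖u ^ r - conj u ^ r‖ / ‖u‖ ^ r) :
    (‖u * conj w - conj u * w‖ / (2 * ‖w‖)) ^ r ≤ ‖u ^ r - conj u ^ r‖ := by
  have hω₁ : ‖ω‖ = 1 := norm_eq_one_of_pow_eq_one hω (by omega)
  have hω₀ : ω ≠ 0 := norm_ne_zero_iff.1 (by rw [hω₁]; exact one_ne_zero)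
  set a := u / conj u * ω⁻¹
  set b := w / conj w * ω⁻¹
  have hkey : (‖a - b‖ / 2) ^ r ≤ ‖a ^ r - 1‖ :=
    half_norm_sub_pow_le_norm_pow_sub_one hr (norm_div_conj_mul_inv hu hω₁)
      (norm_div_conj_mul_inv hw hω₁) harg_u harg_w
      (by rwa [norm_div_conj_mul_inv_pow_sub_one hu hω, norm_div_conj_mul_inv_pow_sub_one hw hω])
  rw [norm_div_conj_mul_inv_pow_sub_one hu hω] at hkey
  have hnorm : ‖u * conj w - conj u * w‖ = ‖u‖ * ‖w‖ * ‖a - b‖ := by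
    rw [mul_conj_sub_conj_mul_eq hu hw hω₀, norm_mul, norm_mul, norm_mul, hω₁, norm_conj,
      norm_conj, one_mul]
  clear_value a b
  have hw₀ : ‖w‖ ≠ 0 := norm_ne_zero_iff.2 hw
  have hu₀ : 0 < ‖u‖ ^ r := by positivity
  rw [hnorm, show ‖u‖ * ‖w‖ * ‖a - b‖ / (2 * ‖w‖) = ‖u‖ * (‖a - b‖ / 2) by field_simp,
    mul_pow]
  calc ‖u‖ ^ r * (‖a - b‖ / 2) ^ r ≤ ‖u‖ ^ r * (‖u ^ r - conj u ^ r‖ / ‖u‖ ^ r) := by gcongr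
    _ = ‖u ^ r - conj u ^ r‖ := by field_simp

end Complex

theorem lin_conj (α β : ℂ) (x y : ℤ) : lin (conj α) (conj β) x y = conj (lin α β x y) := by
  simp [lin]

theorem lin_mul_lin_sub_lin_mul_lin (α β γ δ : ℂ) (x y x' y' : ℤ) :
    lin α β x y * lin γ δ x' y' - lin γ δ x y * lin α β x' y' =
      (α * δ - β * γ) * ((x * y' - y * x' : ℤ) : ℂ) := by
  simp only [lin]
  push_cast
  ring

theorem relatedTo_conj_iff {α β ω : ℂ} {r : ℕ} {x y : ℤ} :
    RelatedTo α β (conj α) (conj β) r ω x y ↔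
      arg (lin α β x y / conj (lin α β x y) * ω⁻¹) ∈ Set.Ioc (-(π / r)) (π / r) := by
  rw [RelatedTo, lin_conj]

theorem Zstar_lower_bound_Dneg_general (r h : ℕ) (hr : 3 ≤ r)
    (α β γ δ j : ℂ) (hγ : γ = (starRingEnd ℂ) α) (hδ : δ = (starRingEnd ℂ) β)
    (hj : j = α * δ - β * γ)
    (x y xs ys : ℤ)
    (hsol : IsPrimSol α β γ δ r h x y) (hsols : IsPrimSol α β γ δ r h xs ys)
    (hne : (xs, ys) ≠ (x, y) ∧ (xs, ys) ≠ (-x, -y))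
    (ω : ℂ) (hω : ω ^ r = 1)
    (hrel : RelatedTo α β γ δ r ω x y) (hrels : RelatedTo α β γ δ r ω xs ys)
    (hζ : zetaF α β γ δ r xs ys ≤ zetaF α β γ δ r x y) :
    ‖j‖ / (2 * (h : ℝ) ^ (1 / (r : ℝ))) ≤ Zmax α β γ δ xs ys := by
  subst hγ hδ hj
  obtain ⟨hcop, hF₀, hFh⟩ := hsol
  obtain ⟨hcop', hF₀', -⟩ := hsols
  rw [relatedTo_conj_iff] at hrel hrels
  simp only [zetaF, Zmax, form, lin_conj, norm_conj, max_self] at hF₀ hFh hF₀' hζ ⊢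
  set u := lin α β x y
  set w := lin α β xs ys
  have hr₀ : r ≠ 0 := by omega
  have hu : u ≠ 0 := fun h₀ => by simp [h₀, hr₀] at hF₀
  have hw : w ≠ 0 := fun h₀ => by simp [h₀, hr₀] at hF₀'
  have hcross : x * ys - y * xs ≠ 0 := fun h₀ => by
    simpa [hne] using Int.eq_or_eq_neg_of_mul_sub_mul_eq_zero
      (Int.isCoprime_iff_gcd_eq_one.2 hcop) (Int.isCoprime_iff_gcd_eq_one.2 hcop') h₀
  have hj : ‖α * conj β - β * conj α‖ ≤ ‖u * conj w - conj u * w‖ := by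
    rw [← lin_conj, ← lin_conj, lin_mul_lin_sub_lin_mul_lin, norm_mul, norm_intCast]
    exact le_mul_of_one_le_right (norm_nonneg _) (by exact_mod_cast Int.one_le_abs hcross)
  have hgap : ‖u * conj w - conj u * w‖ / (2 * ‖w‖) ≤ (h : ℝ) ^ (1 / (r : ℝ)) := by
    rw [one_div, Real.le_rpow_inv_iff_of_pos (by positivity) h.cast_nonneg (by positivity),
      Real.rpow_natCast]
    exact (norm_mul_conj_sub_conj_mul_pow_le hr hω hu hw (abs_le.2 ⟨hrel.1.le, hrel.2⟩)
      (abs_le.2 ⟨hrels.1.le, hrels.2⟩) hζ).trans hFh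
  have hh : 0 < (h : ℝ) ^ (1 / (r : ℝ)) := Real.rpow_pos_of_pos (hF₀.trans_le hFh) _
  rw [div_le_iff₀ (by positivity)]
  rw [div_le_iff₀ (by positivity)] at hgap
  linarith

/-- (Case `D < 0`: `γ = conj α`, `δ = conj β`.) Let `r ≥ 3` and let
`(x,y)`, `(x*,y*)` be primitive solutions of `0 < |F| ≤ h`, distinct up to sign, both
related to the same `r`-th root of unity `ω`, with `ζ(x*,y*) ≤ ζ(x,y)`. Then
`Z(x*,y*) ≥ |j|/(2·h^{1/r})`. -/
theorem Zstar_lower_bound_Dneg (r h : ℕ) (hr : 3 ≤ r) (hh : 1 ≤ h)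
    (α β γ δ j : ℂ) (hγ : γ = (starRingEnd ℂ) α) (hδ : δ = (starRingEnd ℂ) β)
    (hj : j = α * δ - β * γ) (hj0 : j ≠ 0) (hint : IntCoeffs α β γ δ r)
    (x y xs ys : ℤ)
    (hsol : IsPrimSol α β γ δ r h x y) (hsols : IsPrimSol α β γ δ r h xs ys)
    (hne : (xs, ys) ≠ (x, y) ∧ (xs, ys) ≠ (-x, -y))
    (ω : ℂ) (hω : ω ^ r = 1)
    (hrel : RelatedTo α β γ δ r ω x y) (hrels : RelatedTo α β γ δ r ω xs ys)
    (hζ : zetaF α β γ δ r xs ys ≤ zetaF α β γ δ r x y) :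
    ‖j‖ / (2 * (h : ℝ) ^ (1 / (r : ℝ))) ≤ Zmax α β γ δ xs ys :=
  Zstar_lower_bound_Dneg_general r h hr α β γ δ j hγ hδ hj x y xs ys hsol hsols hne ω hω hrel hrels
    hζ
end
end

section
/- Let (x,y) and (x*,y*) be primitive solutions of 0 < |F(x,y)| ≤ h with (x*,y*) ∉ {(x,y), (−x,−y)} and ζ(x*,y*) ≤ ζ(x,y). Then |j| ≤ 2·h^{2/r}·ζ(x*,y*)^{−2/r}, and hence ζ(x*,y*) ≤ 2^{r/2}·h·|j|^{−r/2}. In particular, for any real ν ≥ 0, if |j| > 2^{1+2ν/r}·h^{2/r} then ζ(x*,y*) < 2^{−ν}; in particular if |j| > 2·h^{2/r} then ζ(x*,y*) < 1. -/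
/-! Put `ζ* = ζ(x*,y*)`. Since `ζ* ≤ ζ(x,y)`, each of the two solutions satisfies
`ζ* · Z^r ≤ |F| ≤ h`. The primitive pairs are not proportional, so the integer `x y* − x* y`
is nonzero, and `j (x y* − x* y) = u v* − u* v` gives `|j| ≤ 2 Z Z*`. Hence
`ζ*² |j|^r ≤ 2^r h²`, and the stated bounds are rearrangements of this inequality. -/

open Complex

noncomputable section

theorem Int.eq_or_eq_neg_of_mul_eq_mul_of_gcd_eq_one {x y x' y' : ℤ} (h : Int.gcd x y = 1)
    (h' : Int.gcd x' y' = 1) (hxy : x * y' = x' * y) :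
    (x', y') = (x, y) ∨ (x', y') = (-x, -y) := by
  obtain ⟨a, b, hab⟩ := Int.isCoprime_iff_gcd_eq_one.mpr h
  -- `(x', y') = t • (x, y)` with `t = a x' + b y'`, so primitivity forces `t = ±1`.
  set t := a * x' + b * y'
  have hx' : x' = x * t := by linear_combination (-x') * hab - b * hxy
  have hy' : y' = y * t := by linear_combination (-y') * hab + a * hxy
  have ht : t.natAbs = 1 := by rw [← h', hx', hy', Int.gcd_mul_right, h, one_mul]
  rcases Int.natAbs_eq_iff.mp ht with ht | ht <;> simp [hx', hy', ht]

lemma det_mul_cross (α β γ δ : ℂ) (x y x' y' : ℤ) :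
    (α * δ - β * γ) * ((x * y' - x' * y : ℤ) : ℂ) =
      lin α β x y * lin γ δ x' y' - lin α β x' y' * lin γ δ x y := by
  simp only [lin]; push_cast; ring

lemma norm_det_le_two_mul_Zmax {α β γ δ : ℂ} {x y x' y' : ℤ} (hc : x * y' - x' * y ≠ 0) :
    ‖α * δ - β * γ‖ ≤ 2 * (Zmax α β γ δ x y * Zmax α β γ δ x' y') := by
  have hc1 : (1 : ℝ) ≤ ‖((x * y' - x' * y : ℤ) : ℂ)‖ := by
    rw [Complex.norm_intCast]; exact_mod_cast Int.one_le_abs hc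
  calc ‖α * δ - β * γ‖ ≤ ‖α * δ - β * γ‖ * ‖((x * y' - x' * y : ℤ) : ℂ)‖ :=
        le_mul_of_one_le_right (norm_nonneg _) hc1
    _ = ‖lin α β x y * lin γ δ x' y' - lin α β x' y' * lin γ δ x y‖ := by
        rw [← norm_mul, det_mul_cross]
    _ ≤ ‖lin α β x y‖ * ‖lin γ δ x' y'‖ + ‖lin α β x' y'‖ * ‖lin γ δ x y‖ := by
        rw [← norm_mul, ← norm_mul]; exact norm_sub_le _ _
    _ ≤ Zmax α β γ δ x y * Zmax α β γ δ x' y' + Zmax α β γ δ x' y' * Zmax α β γ δ x y := by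
        unfold Zmax; gcongr <;> simp
    _ = 2 * (Zmax α β γ δ x y * Zmax α β γ δ x' y') := by ring

section Form

variable {α β γ δ : ℂ} {r : ℕ} {x y : ℤ}

lemma Zmax_pos_of_form_ne_zero (hF : form α β γ δ r x y ≠ 0) : 0 < Zmax α β γ δ x y := by
  by_contra! hZ
  have hu : lin α β x y = 0 := norm_le_zero_iff.mp ((le_max_left _ _).trans hZ)
  have hv : lin γ δ x y = 0 := norm_le_zero_iff.mp ((le_max_right _ _).trans hZ)
  exact hF (by rw [form, hu, hv, sub_self])

lemma zetaF_mul_Zmax_pow (hF : form α β γ δ r x y ≠ 0) :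
    zetaF α β γ δ r x y * Zmax α β γ δ x y ^ r = ‖form α β γ δ r x y‖ :=
  div_mul_cancel₀ _ (pow_ne_zero _ (Zmax_pos_of_form_ne_zero hF).ne')

lemma zetaF_pos (hF : form α β γ δ r x y ≠ 0) : 0 < zetaF α β γ δ r x y :=
  div_pos (norm_pos_iff.mpr hF) (pow_pos (Zmax_pos_of_form_ne_zero hF) r)

lemma mul_Zmax_pow_le_of_le_zetaF {t c : ℝ} (hF : form α β γ δ r x y ≠ 0)
    (hc : ‖form α β γ δ r x y‖ ≤ c) (ht : t ≤ zetaF α β γ δ r x y) :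
    t * Zmax α β γ δ x y ^ r ≤ c := by
  calc t * Zmax α β γ δ x y ^ r ≤ zetaF α β γ δ r x y * Zmax α β γ δ x y ^ r :=
        mul_le_mul_of_nonneg_right ht (pow_nonneg (Zmax_pos_of_form_ne_zero hF).le r)
    _ ≤ c := by rwa [zetaF_mul_Zmax_pow hF]

end Form

lemma sq_zetaF_mul_norm_det_pow_le {α β γ δ : ℂ} {r h : ℕ} {x y xs ys : ℤ}
    (hsol : IsPrimSol α β γ δ r h x y) (hsols : IsPrimSol α β γ δ r h xs ys)
    (hne : (xs, ys) ≠ (x, y) ∧ (xs, ys) ≠ (-x, -y))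
    (hζ : zetaF α β γ δ r xs ys ≤ zetaF α β γ δ r x y) :
    zetaF α β γ δ r xs ys ^ 2 * ‖α * δ - β * γ‖ ^ r ≤ 2 ^ r * (h : ℝ) ^ 2 := by
  obtain ⟨hgcd, hF, hFh⟩ := hsol
  obtain ⟨hgcds, hFs, hFsh⟩ := hsols
  rw [norm_pos_iff] at hF hFs
  have hcross : x * ys - xs * y ≠ 0 := fun h0 ↦ by
    rcases Int.eq_or_eq_neg_of_mul_eq_mul_of_gcd_eq_one hgcd hgcds (by linarith) with he | he
    exacts [hne.1 he, hne.2 he]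
  set ζs := zetaF α β γ δ r xs ys
  have hZ := mul_Zmax_pow_le_of_le_zetaF hF hFh hζ
  have hZs := mul_Zmax_pow_le_of_le_zetaF hFs hFsh le_rfl
  calc ζs ^ 2 * ‖α * δ - β * γ‖ ^ r
      ≤ ζs ^ 2 * (2 * (Zmax α β γ δ x y * Zmax α β γ δ xs ys)) ^ r := by
        gcongr; exact norm_det_le_two_mul_Zmax hcross
    _ = 2 ^ r * ((ζs * Zmax α β γ δ x y ^ r) * (ζs * Zmax α β γ δ xs ys ^ r)) := by ring
    _ ≤ 2 ^ r * (h : ℝ) ^ 2 := by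
        rw [sq]
        gcongr 2 ^ r * ?_
        have hZs0 := pow_nonneg (Zmax_pos_of_form_ne_zero hFs).le r
        exact mul_le_mul hZ hZs (mul_nonneg (zetaF_pos hFs).le hZs0) h.cast_nonneg

section RealBounds

variable {r : ℕ} {z J c : ℝ}

lemma le_two_mul_rpow_of_sq_mul_pow_le (hr : r ≠ 0) (hz : 0 < z) (hJ : 0 ≤ J) (hc : 0 ≤ c)
    (H : z ^ 2 * J ^ r ≤ 2 ^ r * c ^ 2) :
    J ≤ 2 * c ^ ((2 : ℝ) / r) * z ^ (-(2 : ℝ) / r) := by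
  have hpow : ∀ {w : ℝ}, 0 ≤ w → ∀ s : ℝ, (w ^ (s / r)) ^ r = w ^ s := fun hw s ↦ by
    rw [← Real.rpow_mul_natCast hw, div_mul_cancel₀ _ (Nat.cast_ne_zero.mpr hr)]
  rw [← pow_le_pow_iff_left₀ hJ (by positivity) hr, mul_pow, mul_pow, hpow hc, hpow hz.le,
    Real.rpow_neg hz.le, Real.rpow_two, Real.rpow_two, ← div_eq_mul_inv,
    le_div_iff₀ (by positivity)]
  linarith

lemma le_rpow_mul_rpow_neg_of_sq_mul_pow_le (hz : 0 ≤ z) (hJ : 0 < J) (hc : 0 ≤ c)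
    (H : z ^ 2 * J ^ r ≤ 2 ^ r * c ^ 2) :
    z ≤ (2 : ℝ) ^ ((r : ℝ) / 2) * c * J ^ (-(r : ℝ) / 2) := by
  have hpow : ∀ {w : ℝ}, 0 ≤ w → (w ^ ((r : ℝ) / 2)) ^ 2 = w ^ r := fun hw ↦ by
    rw [← Real.rpow_mul_natCast hw]; norm_num
  rw [neg_div, Real.rpow_neg hJ.le, ← div_eq_mul_inv, le_div_iff₀ (by positivity),
    ← pow_le_pow_iff_left₀ (by positivity) (by positivity) two_ne_zero, mul_pow, mul_pow,
    hpow hJ.le, hpow zero_le_two]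
  exact H

lemma lt_two_rpow_neg_of_le_two_mul_rpow (hr : r ≠ 0) (hz : 0 < z) (hc : 0 < c)
    (H : J ≤ 2 * c ^ ((2 : ℝ) / r) * z ^ (-(2 : ℝ) / r)) {ν : ℝ}
    (hJ : (2 : ℝ) ^ (1 + 2 * ν / r) * c ^ ((2 : ℝ) / r) < J) : z < (2 : ℝ) ^ (-ν) := by
  have hp : (0 : ℝ) < 2 / r := by positivity
  have h2 : (2 : ℝ) ^ (2 * ν / r) < z ^ (-(2 : ℝ) / r) := by
    rw [Real.rpow_add two_pos, Real.rpow_one] at hJ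
    refine lt_of_mul_lt_mul_left (a := 2 * c ^ ((2 : ℝ) / r)) ?_ (by positivity)
    linarith [hJ.trans_le H]
  rw [show 2 * ν / r = ν * (2 / r) by ring, Real.rpow_mul zero_le_two, neg_div,
    Real.rpow_neg hz.le, ← Real.inv_rpow hz.le,
    Real.rpow_lt_rpow_iff (by positivity) (by positivity) hp, lt_inv_comm₀ (by positivity) hz] at h2
  rwa [Real.rpow_neg zero_le_two]

end RealBounds

theorem zetastar_small_general (r h : ℕ) (hr : 2 ≤ r) (hh : 1 ≤ h)
    (α β γ δ j : ℂ) (hj : j = α * δ - β * γ) (hj0 : j ≠ 0)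
    (x y xs ys : ℤ)
    (hsol : IsPrimSol α β γ δ r h x y) (hsols : IsPrimSol α β γ δ r h xs ys)
    (hne : (xs, ys) ≠ (x, y) ∧ (xs, ys) ≠ (-x, -y))
    (hζ : zetaF α β γ δ r xs ys ≤ zetaF α β γ δ r x y) :
    ‖j‖ ≤ 2 * (h : ℝ) ^ ((2 : ℝ) / r) * zetaF α β γ δ r xs ys ^ (-(2 : ℝ) / r) ∧
    zetaF α β γ δ r xs ys ≤ (2 : ℝ) ^ ((r : ℝ) / 2) * (h : ℝ) * ‖j‖ ^ (-(r : ℝ) / 2) ∧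
    (∀ ν : ℝ, 0 ≤ ν →
      (2 : ℝ) ^ (1 + 2 * ν / r) * (h : ℝ) ^ ((2 : ℝ) / r) < ‖j‖ →
        zetaF α β γ δ r xs ys < (2 : ℝ) ^ (-ν)) ∧
    (2 * (h : ℝ) ^ ((2 : ℝ) / r) < ‖j‖ → zetaF α β γ δ r xs ys < 1) := by
  subst hj
  have hr0 : r ≠ 0 := by omega
  have hh0 : (0 : ℝ) < h := Nat.cast_pos.mpr hh
  have hζs : 0 < zetaF α β γ δ r xs ys := zetaF_pos (norm_pos_iff.mp hsols.2.1)
  have key := sq_zetaF_mul_norm_det_pow_le hsol hsols hne hζ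
  have hj := le_two_mul_rpow_of_sq_mul_pow_le hr0 hζs (norm_nonneg _) hh0.le key
  refine ⟨hj, le_rpow_mul_rpow_neg_of_sq_mul_pow_le hζs.le (norm_pos_iff.mpr hj0) hh0.le key,
    fun ν _ ↦ lt_two_rpow_neg_of_le_two_mul_rpow hr0 hζs hh0 hj, fun hlt ↦ ?_⟩
  simpa using lt_two_rpow_neg_of_le_two_mul_rpow hr0 hζs hh0 hj (ν := 0) (by simpa using hlt)

/-- Let `(x,y)`, `(x*,y*)` be primitive solutions of `0 < |F| ≤ h`,
distinct up to sign, with `ζ(x*,y*) ≤ ζ(x,y)`. Then `|j| ≤ 2·h^{2/r}·ζ(x*,y*)^{−2/r}`,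
hence `ζ(x*,y*) ≤ 2^{r/2}·h·|j|^{−r/2}`; in particular for any `ν ≥ 0`, if
`|j| > 2^{1+2ν/r}·h^{2/r}` then `ζ(x*,y*) < 2^{−ν}`, and if `|j| > 2·h^{2/r}` then
`ζ(x*,y*) < 1`. -/
theorem zetastar_small (r h : ℕ) (hr : 2 ≤ r) (hh : 1 ≤ h)
    (α β γ δ j : ℂ) (hj : j = α * δ - β * γ) (hj0 : j ≠ 0) (hint : IntCoeffs α β γ δ r)
    (x y xs ys : ℤ)
    (hsol : IsPrimSol α β γ δ r h x y) (hsols : IsPrimSol α β γ δ r h xs ys)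
    (hne : (xs, ys) ≠ (x, y) ∧ (xs, ys) ≠ (-x, -y))
    (hζ : zetaF α β γ δ r xs ys ≤ zetaF α β γ δ r x y) :
    ‖j‖ ≤ 2 * (h : ℝ) ^ ((2 : ℝ) / r) * zetaF α β γ δ r xs ys ^ (-(2 : ℝ) / r) ∧
    zetaF α β γ δ r xs ys ≤ (2 : ℝ) ^ ((r : ℝ) / 2) * (h : ℝ) * ‖j‖ ^ (-(r : ℝ) / 2) ∧
    (∀ ν : ℝ, 0 ≤ ν →
      (2 : ℝ) ^ (1 + 2 * ν / r) * (h : ℝ) ^ ((2 : ℝ) / r) < ‖j‖ →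
        zetaF α β γ δ r xs ys < (2 : ℝ) ^ (-ν)) ∧
    (2 * (h : ℝ) ^ ((2 : ℝ) / r) < ‖j‖ → zetaF α β γ δ r xs ys < 1) :=
  zetastar_small_general r h hr hh α β γ δ j hj hj0 x y xs ys hsol hsols hne hζ
end
end

section
/- Let r ≥ 3 and assume |j| > 2·h^{2/r}. Let (x_1,y_1), (x_2,y_2), (x_3,y_3) be primitive solutions of 0 < |F(x,y)| ≤ h, pairwise distinct up to sign, all related to the same r-th root of unity ω, with ζ_1 ≥ ζ_2 ≥ ζ_3. Assume that either (a) γ = conj(α) and δ = conj(β) (the case D < 0), or (b) u_i, v_i are nonzero and μ_i is real for i = 1,2,3 (the case D > 0). Then Z_2 ≥ |j|/(2·h^{1/r}), Z_3 ≥ (|j|/(2h))·Z_2^{r−1}, and consequently Z_3 ≥ |j|^r/(2^r·h^{2−1/r}). -/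
open Complex

noncomputable section

/-!
Write `u, v` for the two linear forms of a solution and `w = (u / v) ω⁻¹`. If the solution is
related to `ω` then `|arg w| ≤ π / r ≤ π / 3`, and either `|w| = 1` (case `D < 0`) or `w ^ r` is
real (case `D > 0`); in both cases `|w - 1| ≤ max(|w|, 1)` and
`|w - 1| · max(|w|, 1) ^ (r - 1) ≤ |w ^ r - 1|`. Scaled by `v`, this says that `A = |u - ω v|`
satisfies `A ≤ Z` and `A · Z ^ (r - 1) ≤ |F|`, hence `A ^ r ≤ |F| ≤ h`.

For two primitive solutions distinct up to sign, `u₁ v₂ - u₂ v₁ = j (x₁ y₂ - x₂ y₁)` with a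
nonzero integer determinant; rewriting the left side as `(u₁ - ω v₁) v₂ - (u₂ - ω v₂) v₁` gives
`|j| ≤ A₁ Z₂ + A₂ Z₁`. Together with `ζ₁ ≥ ζ₂ ≥ ζ₃` this yields the two gap principles, and the
last bound is their composite.
-/

namespace Thue

lemma norm_sub_one_sq (w : ℂ) : ‖w - 1‖ ^ 2 = ‖w‖ ^ 2 - 2 * w.re + 1 := by
  rw [Complex.sq_norm, Complex.sq_norm, normSq_sub]
  simp only [map_one, mul_one]
  ring

lemma pow_eq_ofReal_mul_exp (w : ℂ) (r : ℕ) :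
    w ^ r = ((‖w‖ ^ r : ℝ) : ℂ) * exp ((r * arg w : ℝ) * I) := by
  conv_lhs => rw [← norm_mul_exp_arg_mul_I w]
  rw [mul_pow, ← exp_nat_mul]
  push_cast
  ring_nf

lemma re_pow (w : ℂ) (r : ℕ) : (w ^ r).re = ‖w‖ ^ r * Real.cos (r * arg w) := by
  rw [pow_eq_ofReal_mul_exp, re_ofReal_mul, exp_ofReal_mul_I_re]

lemma im_pow (w : ℂ) (r : ℕ) : (w ^ r).im = ‖w‖ ^ r * Real.sin (r * arg w) := by
  rw [pow_eq_ofReal_mul_exp, im_ofReal_mul, exp_ofReal_mul_I_im]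

lemma half_le_cos_of_abs_le {θ : ℝ} (hθ : |θ| ≤ Real.pi / 3) : 1 / 2 ≤ Real.cos θ := by
  rw [← Real.cos_abs, ← Real.cos_pi_div_three]
  exact Real.cos_le_cos_of_nonneg_of_le_pi (abs_nonneg θ) (by linarith [Real.pi_pos]) hθ

lemma norm_sub_one_le_max {w : ℂ} (hw : 1 / 2 ≤ Real.cos (arg w)) : ‖w - 1‖ ≤ max ‖w‖ 1 := by
  have hre : w.re = ‖w‖ * Real.cos (arg w) := (norm_mul_cos_arg w).symm
  have hsq : ‖w - 1‖ ^ 2 ≤ max ‖w‖ 1 ^ 2 := by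
    rw [norm_sub_one_sq, hre]
    rcases le_total ‖w‖ 1 with h | h
    · rw [max_eq_right h]; nlinarith [norm_nonneg w]
    · rw [max_eq_left h]; nlinarith
  exact (pow_le_pow_iff_left₀ (norm_nonneg _) (by positivity) two_ne_zero).mp hsq

lemma norm_sub_one_le_norm_pow_sub_one {w : ℂ} {r : ℕ} (hw : ‖w‖ = 1) (hr : r ≠ 0)
    (harg : r * |arg w| ≤ Real.pi) : ‖w - 1‖ ≤ ‖w ^ r - 1‖ := by
  have hcos : Real.cos (r * arg w) ≤ Real.cos (arg w) := by
    rw [← Real.cos_abs (arg w), ← Real.cos_abs, abs_mul, Nat.abs_cast]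
    refine Real.cos_le_cos_of_nonneg_of_le_pi (abs_nonneg _) harg ?_
    exact le_mul_of_one_le_left (abs_nonneg _) (Nat.one_le_cast.mpr (Nat.one_le_iff_ne_zero.mpr hr))
  have hsq : ‖w - 1‖ ^ 2 ≤ ‖w ^ r - 1‖ ^ 2 := by
    rw [norm_sub_one_sq, norm_sub_one_sq, re_pow, norm_pow, ← norm_mul_cos_arg w, hw]
    simp only [one_pow, one_mul]
    linarith
  exact (pow_le_pow_iff_left₀ (norm_nonneg _) (norm_nonneg _) two_ne_zero).mp hsq

lemma abs_sub_one_mul_max_pow_le {ρ : ℝ} {r : ℕ} (hρ : 0 ≤ ρ) (hr : r ≠ 0) :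
    |ρ - 1| * max ρ 1 ^ (r - 1) ≤ |ρ ^ r - 1| := by
  rcases le_total ρ 1 with h | h
  · have : ρ ^ r ≤ ρ := pow_le_of_le_one hρ h hr
    rw [max_eq_right h, one_pow, mul_one, abs_of_nonpos (by linarith),
      abs_of_nonpos (by linarith)]
    linarith
  · have h1 : 1 ≤ ρ ^ (r - 1) := one_le_pow₀ h
    rw [max_eq_left h, abs_of_nonneg (by linarith), abs_of_nonneg (one_le_pow₀ h |> sub_nonneg.mpr),
      ← mul_pow_sub_one hr ρ]
    nlinarith

lemma max_pow_le_pow_add_one {ρ : ℝ} (hρ : 0 ≤ ρ) (r : ℕ) : max ρ 1 ^ r ≤ ρ ^ r + 1 := by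
  rcases le_total ρ 1 with h | h
  · rw [max_eq_right h, one_pow]; linarith [pow_nonneg hρ r]
  · rw [max_eq_left h]; linarith

lemma mul_abs_le_pi {θ : ℝ} {r : ℕ} (hr : r ≠ 0) (hθ : θ ∈ Set.Ioc (-(Real.pi / r)) (Real.pi / r)) :
    r * |θ| ≤ Real.pi := by
  have hr' : (0 : ℝ) < r := by positivity
  rw [← le_div_iff₀' hr']
  exact abs_le.mpr ⟨hθ.1.le, hθ.2⟩

lemma half_le_cos_arg {w : ℂ} {r : ℕ} (hr : 3 ≤ r)
    (harg : arg w ∈ Set.Ioc (-(Real.pi / r)) (Real.pi / r)) : 1 / 2 ≤ Real.cos (arg w) := by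
  refine half_le_cos_of_abs_le ((abs_le.mpr ⟨harg.1.le, harg.2⟩).trans ?_)
  gcongr
  exact_mod_cast hr

lemma arg_eq_zero_or_mul_arg_eq_pi {w : ℂ} {r : ℕ} (hr : r ≠ 0) (hw : w ≠ 0)
    (harg : arg w ∈ Set.Ioc (-(Real.pi / r)) (Real.pi / r)) (him : (w ^ r).im = 0) :
    arg w = 0 ∨ r * arg w = Real.pi := by
  have hr' : (0 : ℝ) < r := by positivity
  have hsin : Real.sin (r * arg w) = 0 := by
    rw [im_pow] at him
    exact (mul_eq_zero.mp him).resolve_left (pow_ne_zero r (norm_ne_zero_iff.mpr hw))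
  have hlow : -Real.pi < r * arg w := by
    have := mul_lt_mul_of_pos_left harg.1 hr'
    rwa [mul_neg, mul_div_cancel₀ _ hr'.ne'] at this
  have hhigh : r * arg w ≤ Real.pi := by
    have := mul_le_mul_of_nonneg_left harg.2 hr'.le
    rwa [mul_div_cancel₀ _ hr'.ne'] at this
  rcases hhigh.lt_or_eq with hlt | heq
  · left
    have := (Real.sin_eq_zero_iff_of_lt_of_lt hlow hlt).mp hsin
    exact (mul_eq_zero.mp this).resolve_left hr'.ne'
  · exact Or.inr heq

lemma norm_sub_one_mul_max_pow_le {w : ℂ} {r : ℕ} (hr : 3 ≤ r)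
    (harg : arg w ∈ Set.Ioc (-(Real.pi / r)) (Real.pi / r))
    (hw : ‖w‖ = 1 ∨ (w ≠ 0 ∧ (w ^ r).im = 0)) :
    ‖w - 1‖ * max ‖w‖ 1 ^ (r - 1) ≤ ‖w ^ r - 1‖ := by
  have hr0 : r ≠ 0 := by omega
  rcases hw with hw | ⟨hw0, him⟩
  · rw [hw, max_self, one_pow, mul_one]
    exact norm_sub_one_le_norm_pow_sub_one hw hr0 (mul_abs_le_pi hr0 harg)
  rcases arg_eq_zero_or_mul_arg_eq_pi hr0 hw0 harg him with h0 | hpi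
  · have hw_real : w = (‖w‖ : ℂ) := by
      simpa [h0] using (norm_mul_exp_arg_mul_I w).symm
    rw [hw_real, norm_real, Real.norm_of_nonneg (norm_nonneg w), ← ofReal_pow, ← ofReal_one,
      ← ofReal_sub, ← ofReal_sub, norm_real, norm_real, Real.norm_eq_abs, Real.norm_eq_abs]
    exact abs_sub_one_mul_max_pow_le (norm_nonneg w) hr0
  · have hwr : w ^ r = -((‖w‖ ^ r : ℝ) : ℂ) := by
      rw [pow_eq_ofReal_mul_exp, hpi, exp_pi_mul_I, mul_neg_one]
    have hnorm : ‖w ^ r - 1‖ = ‖w‖ ^ r + 1 := by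
      rw [hwr, ← neg_add', norm_neg, ← ofReal_one, ← ofReal_add, norm_real,
        Real.norm_of_nonneg (by positivity)]
    calc ‖w - 1‖ * max ‖w‖ 1 ^ (r - 1)
        ≤ max ‖w‖ 1 * max ‖w‖ 1 ^ (r - 1) := by
          gcongr; exact norm_sub_one_le_max (half_le_cos_arg hr harg)
      _ = max ‖w‖ 1 ^ r := mul_pow_sub_one hr0 _
      _ ≤ ‖w ^ r - 1‖ := hnorm ▸ max_pow_le_pow_add_one (norm_nonneg w) r

section RootApproximation

variable {u v ω : ℂ} {r : ℕ}

lemma norm_sub_mul_eq (hv : v ≠ 0) (hω : ‖ω‖ = 1) :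
    ‖u - ω * v‖ = ‖u / v * ω⁻¹ - 1‖ * ‖v‖ := by
  have hω0 : ω ≠ 0 := norm_ne_zero_iff.mp (hω ▸ one_ne_zero)
  calc ‖u - ω * v‖ = ‖ω * ((u / v * ω⁻¹ - 1) * v)‖ := by congr 1; field_simp
    _ = ‖u / v * ω⁻¹ - 1‖ * ‖v‖ := by rw [norm_mul, norm_mul, hω, one_mul]

lemma max_norm_eq (hv : v ≠ 0) (hω : ‖ω‖ = 1) :
    max ‖u‖ ‖v‖ = max ‖u / v * ω⁻¹‖ 1 * ‖v‖ := by
  rw [norm_mul, norm_div, norm_inv, hω, inv_one, mul_one, max_mul_of_nonneg _ _ (norm_nonneg v),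
    div_mul_cancel₀ _ (norm_ne_zero_iff.mpr hv), one_mul]

lemma norm_pow_sub_pow_eq (hv : v ≠ 0) (hω : ω ^ r = 1) :
    ‖u ^ r - v ^ r‖ = ‖(u / v * ω⁻¹) ^ r - 1‖ * ‖v‖ ^ r := by
  rw [mul_pow, div_pow, inv_pow, hω, inv_one, mul_one, ← norm_pow, ← norm_mul, sub_mul,
    div_mul_cancel₀ _ (pow_ne_zero r hv), one_mul]

lemma norm_sub_mul_le_max_norm (hr : 3 ≤ r) (hω : ω ^ r = 1) (hv : v ≠ 0)
    (harg : arg (u / v * ω⁻¹) ∈ Set.Ioc (-(Real.pi / r)) (Real.pi / r)) :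
    ‖u - ω * v‖ ≤ max ‖u‖ ‖v‖ := by
  have hω1 := norm_eq_one_of_pow_eq_one hω (by omega)
  rw [norm_sub_mul_eq hv hω1, max_norm_eq hv hω1]
  exact mul_le_mul_of_nonneg_right (norm_sub_one_le_max (half_le_cos_arg hr harg)) (norm_nonneg v)

lemma norm_sub_mul_mul_max_pow_le (hr : 3 ≤ r) (hω : ω ^ r = 1) (hv : v ≠ 0)
    (harg : arg (u / v * ω⁻¹) ∈ Set.Ioc (-(Real.pi / r)) (Real.pi / r))
    (huv : ‖u‖ = ‖v‖ ∨ (u ≠ 0 ∧ (v ^ r / u ^ r).im = 0)) :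
    ‖u - ω * v‖ * max ‖u‖ ‖v‖ ^ (r - 1) ≤ ‖u ^ r - v ^ r‖ := by
  have hr0 : r ≠ 0 := by omega
  have hω1 := norm_eq_one_of_pow_eq_one hω hr0
  have hw : ‖u / v * ω⁻¹‖ = 1 ∨ (u / v * ω⁻¹ ≠ 0 ∧ ((u / v * ω⁻¹) ^ r).im = 0) := by
    refine huv.imp (fun h => ?_) (fun ⟨hu, him⟩ => ⟨?_, ?_⟩)
    · rw [norm_mul, norm_div, norm_inv, hω1, h, div_self (norm_ne_zero_iff.mpr hv), inv_one,
        mul_one]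
    · exact mul_ne_zero (div_ne_zero hu hv) (inv_ne_zero (norm_ne_zero_iff.mp (hω1 ▸ one_ne_zero)))
    · rw [mul_pow, div_pow, inv_pow, hω, inv_one, mul_one, ← inv_div, inv_im, him, neg_zero,
        zero_div]
  rw [norm_sub_mul_eq hv hω1, max_norm_eq hv hω1, norm_pow_sub_pow_eq hv hω]
  calc ‖u / v * ω⁻¹ - 1‖ * ‖v‖ * (max ‖u / v * ω⁻¹‖ 1 * ‖v‖) ^ (r - 1)
      = (‖u / v * ω⁻¹ - 1‖ * max ‖u / v * ω⁻¹‖ 1 ^ (r - 1)) * (‖v‖ * ‖v‖ ^ (r - 1)) := by ring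
    _ ≤ ‖(u / v * ω⁻¹) ^ r - 1‖ * (‖v‖ * ‖v‖ ^ (r - 1)) := by
      gcongr; exact norm_sub_one_mul_max_pow_le hr harg hw
    _ = ‖(u / v * ω⁻¹) ^ r - 1‖ * ‖v‖ ^ r := by rw [mul_pow_sub_one hr0]

lemma norm_sub_mul_pow_le (hr : 3 ≤ r) (hω : ω ^ r = 1) (hv : v ≠ 0)
    (harg : arg (u / v * ω⁻¹) ∈ Set.Ioc (-(Real.pi / r)) (Real.pi / r))
    (huv : ‖u‖ = ‖v‖ ∨ (u ≠ 0 ∧ (v ^ r / u ^ r).im = 0)) :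
    ‖u - ω * v‖ ^ r ≤ ‖u ^ r - v ^ r‖ :=
  calc ‖u - ω * v‖ ^ r = ‖u - ω * v‖ * ‖u - ω * v‖ ^ (r - 1) := (mul_pow_sub_one (by omega) _).symm
    _ ≤ ‖u - ω * v‖ * max ‖u‖ ‖v‖ ^ (r - 1) := by
      gcongr; exact norm_sub_mul_le_max_norm hr hω hv harg
    _ ≤ ‖u ^ r - v ^ r‖ := norm_sub_mul_mul_max_pow_le hr hω hv harg huv

end RootApproximation

lemma eq_or_eq_neg_of_mul_eq_mul {a b c d : ℤ} (hab : IsCoprime a b) (hcd : IsCoprime c d)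
    (h : a * d = b * c) : c = a ∧ d = b ∨ c = -a ∧ d = -b := by
  obtain ⟨x, y, hxy⟩ := hab
  -- with `x a + y b = 1`, the factor `k = c x + d y` satisfies `(c, d) = k (a, b)`
  have hc : c = a * (c * x + d * y) := by linear_combination (-c) * hxy - y * h
  have hd : d = b * (c * x + d * y) := by linear_combination (-d) * hxy + x * h
  have hk : IsUnit (c * x + d * y) :=
    hcd.isUnit_of_dvd' (Dvd.intro_left a hc.symm) (Dvd.intro_left b hd.symm)
  rcases Int.isUnit_iff.mp hk with hk | hk
  · left; rw [hk, mul_one] at hc hd; exact ⟨hc, hd⟩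
  · right; rw [hk, mul_neg_one] at hc hd; exact ⟨hc, hd⟩

section GapPrinciples

variable {r : ℕ} {J h A₁ A₂ A₃ F₁ F₂ F₃ Z₁ Z₂ Z₃ : ℝ}

lemma le_rpow_inv_mul_of_pow_le {a b Z : ℝ} (hr : r ≠ 0) (ha : 0 ≤ a) (hb : 0 ≤ b) (hZ : 0 ≤ Z)
    (h : a ^ r ≤ b * Z ^ r) : a ≤ b ^ (1 / (r : ℝ)) * Z := by
  have := Real.rpow_le_rpow (by positivity) h (by positivity : (0 : ℝ) ≤ 1 / (r : ℝ))
  rwa [one_div, Real.pow_rpow_inv_natCast ha hr, Real.mul_rpow hb (by positivity),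
    Real.pow_rpow_inv_natCast hZ hr, ← one_div] at this

lemma gap_principle_rpow (hr : r ≠ 0) (hh : 0 < h) (hA₁ : 0 ≤ A₁) (hA₂ : 0 ≤ A₂)
    (hZ₁ : 0 ≤ Z₁) (hZ₂ : 0 ≤ Z₂) (hA₁h : A₁ ^ r ≤ h) (hA₂F : A₂ ^ r ≤ F₂)
    (hζ : F₂ * Z₁ ^ r ≤ F₁ * Z₂ ^ r) (hF₁ : F₁ ≤ h) (hJ : J ≤ A₁ * Z₂ + A₂ * Z₁) :
    J / (2 * h ^ (1 / (r : ℝ))) ≤ Z₂ := by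
  have h₁ : A₁ * Z₂ ≤ h ^ (1 / (r : ℝ)) * Z₂ := by
    refine le_rpow_inv_mul_of_pow_le hr (by positivity) hh.le hZ₂ ?_
    rw [mul_pow]
    gcongr
  have h₂ : A₂ * Z₁ ≤ h ^ (1 / (r : ℝ)) * Z₂ := by
    refine le_rpow_inv_mul_of_pow_le hr (by positivity) hh.le hZ₂ ?_
    calc (A₂ * Z₁) ^ r = A₂ ^ r * Z₁ ^ r := mul_pow _ _ _
      _ ≤ F₂ * Z₁ ^ r := by gcongr
      _ ≤ F₁ * Z₂ ^ r := hζ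
      _ ≤ h * Z₂ ^ r := by gcongr
  rw [div_le_iff₀ (by positivity)]
  linarith

lemma gap_principle_pow (hr : r ≠ 0) (hh : 0 < h) (hZ₂ : 0 ≤ Z₂) (hZ₃ : 0 < Z₃)
    (hA₂F : A₂ * Z₂ ^ (r - 1) ≤ F₂) (hF₂ : F₂ ≤ h) (hA₃F : A₃ * Z₃ ^ (r - 1) ≤ F₃)
    (hζ : F₃ * Z₂ ^ r ≤ F₂ * Z₃ ^ r) (hJ : J ≤ A₂ * Z₃ + A₃ * Z₂) :
    J / (2 * h) * Z₂ ^ (r - 1) ≤ Z₃ := by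
  have h₁ : A₂ * Z₂ ^ (r - 1) * Z₃ ≤ h * Z₃ := by gcongr; linarith
  have h₂ : A₃ * Z₂ ^ r ≤ h * Z₃ := by
    refine le_of_mul_le_mul_right ?_ (pow_pos hZ₃ (r - 1))
    calc A₃ * Z₂ ^ r * Z₃ ^ (r - 1) = A₃ * Z₃ ^ (r - 1) * Z₂ ^ r := by ring
      _ ≤ F₃ * Z₂ ^ r := by gcongr
      _ ≤ F₂ * Z₃ ^ r := hζ
      _ ≤ h * Z₃ ^ r := by gcongr
      _ = h * Z₃ * Z₃ ^ (r - 1) := by rw [mul_assoc, mul_pow_sub_one hr]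
  rw [div_mul_eq_mul_div, div_le_iff₀ (by positivity)]
  calc J * Z₂ ^ (r - 1) ≤ (A₂ * Z₃ + A₃ * Z₂) * Z₂ ^ (r - 1) := by gcongr
    _ = A₂ * Z₂ ^ (r - 1) * Z₃ + A₃ * Z₂ ^ r := by rw [← mul_pow_sub_one hr Z₂]; ring
    _ ≤ Z₃ * (2 * h) := by linarith

lemma mul_rpow_inv_pow_sub_one (hr : r ≠ 0) (hh : 0 < h) :
    h * (h ^ (1 / (r : ℝ))) ^ (r - 1) = h ^ (2 - 1 / (r : ℝ)) := by
  have hcast : ((r - 1 : ℕ) : ℝ) = r - 1 := by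
    rw [Nat.cast_sub (Nat.one_le_iff_ne_zero.mpr hr), Nat.cast_one]
  rw [← Real.rpow_natCast, ← Real.rpow_mul hh.le, hcast,
    show (2 - 1 / (r : ℝ)) = 1 + 1 / r * (r - 1) by field_simp; ring, Real.rpow_add hh,
    Real.rpow_one]

lemma pow_div_le_of_gap_principles (hr : r ≠ 0) (hh : 0 < h) (hJ : 0 ≤ J)
    (h₂ : J / (2 * h ^ (1 / (r : ℝ))) ≤ Z₂) (h₃ : J / (2 * h) * Z₂ ^ (r - 1) ≤ Z₃) :
    J ^ r / (2 ^ r * h ^ (2 - 1 / (r : ℝ))) ≤ Z₃ :=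
  calc J ^ r / (2 ^ r * h ^ (2 - 1 / (r : ℝ)))
      = J / (2 * h) * (J / (2 * h ^ (1 / (r : ℝ)))) ^ (r - 1) := by
        rw [← mul_rpow_inv_pow_sub_one hr hh, div_pow, mul_pow, div_mul_div_comm,
          mul_pow_sub_one hr J, ← mul_pow_sub_one hr (2 : ℝ)]
        ring
    _ ≤ J / (2 * h) * Z₂ ^ (r - 1) := by gcongr
    _ ≤ Z₃ := h₃

end GapPrinciples

section Solutions

variable {α β γ δ ω : ℂ} {r : ℕ}

lemma lin_conj (hγ : γ = starRingEnd ℂ α) (hδ : δ = starRingEnd ℂ β) (x y : ℤ) :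
    lin γ δ x y = starRingEnd ℂ (lin α β x y) := by
  simp [lin, hγ, hδ]

lemma bounds_of_relatedTo {x y : ℤ} (hr : 3 ≤ r) (hω : ω ^ r = 1)
    (hF : 0 < ‖form α β γ δ r x y‖) (hrel : RelatedTo α β γ δ r ω x y)
    (hcase : (γ = starRingEnd ℂ α ∧ δ = starRingEnd ℂ β) ∨
      (lin α β x y ≠ 0 ∧ lin γ δ x y ≠ 0 ∧ (muF α β γ δ r x y).im = 0)) :
    0 < Zmax α β γ δ x y ∧
    ‖lin α β x y - ω * lin γ δ x y‖ ^ r ≤ ‖form α β γ δ r x y‖ ∧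
    ‖lin α β x y - ω * lin γ δ x y‖ * Zmax α β γ δ x y ^ (r - 1) ≤ ‖form α β γ δ r x y‖ := by
  have hv : lin γ δ x y ≠ 0 := by
    rcases hcase with ⟨hγ, hδ⟩ | ⟨-, hv, -⟩
    · intro hv
      rw [lin_conj hγ hδ, map_eq_zero] at hv
      simp [form, lin_conj hγ hδ, hv, zero_pow (by omega : r ≠ 0)] at hF
    · exact hv
  have huv : ‖lin α β x y‖ = ‖lin γ δ x y‖ ∨
      (lin α β x y ≠ 0 ∧ (lin γ δ x y ^ r / lin α β x y ^ r).im = 0) :=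
    hcase.imp (fun ⟨hγ, hδ⟩ => by rw [lin_conj hγ hδ, norm_conj]) (fun h => ⟨h.1, h.2.2⟩)
  exact ⟨lt_max_of_lt_right (norm_pos_iff.mpr hv), norm_sub_mul_pow_le hr hω hv hrel huv,
    norm_sub_mul_mul_max_pow_le hr hω hv hrel huv⟩

lemma norm_le_of_distinct_primitive {j : ℂ} (hj : j = α * δ - β * γ) {s t : ℤ × ℤ}
    (hs : Int.gcd s.1 s.2 = 1) (ht : Int.gcd t.1 t.2 = 1) (hst : s ≠ t ∧ s ≠ (-t.1, -t.2)) :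
    ‖j‖ ≤ ‖lin α β s.1 s.2 - ω * lin γ δ s.1 s.2‖ * Zmax α β γ δ t.1 t.2 +
      ‖lin α β t.1 t.2 - ω * lin γ δ t.1 t.2‖ * Zmax α β γ δ s.1 s.2 := by
  have hdet : s.1 * t.2 - s.2 * t.1 ≠ 0 := by
    intro h
    rcases eq_or_eq_neg_of_mul_eq_mul (Int.isCoprime_iff_gcd_eq_one.mpr ht)
      (Int.isCoprime_iff_gcd_eq_one.mpr hs) (by linarith) with ⟨h1, h2⟩ | ⟨h1, h2⟩
    · exact hst.1 (Prod.ext h1 h2)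
    · exact hst.2 (Prod.ext h1 h2)
  have hident : (lin α β s.1 s.2 - ω * lin γ δ s.1 s.2) * lin γ δ t.1 t.2 -
      (lin α β t.1 t.2 - ω * lin γ δ t.1 t.2) * lin γ δ s.1 s.2 =
      j * ((s.1 * t.2 - s.2 * t.1 : ℤ) : ℂ) := by
    rw [hj]; simp only [lin]; push_cast; ring
  calc ‖j‖ ≤ ‖j‖ * ‖((s.1 * t.2 - s.2 * t.1 : ℤ) : ℂ)‖ := by
        rw [norm_intCast]
        exact le_mul_of_one_le_right (norm_nonneg j) (by exact_mod_cast Int.one_le_abs hdet)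
    _ ≤ ‖lin α β s.1 s.2 - ω * lin γ δ s.1 s.2‖ * ‖lin γ δ t.1 t.2‖ +
        ‖lin α β t.1 t.2 - ω * lin γ δ t.1 t.2‖ * ‖lin γ δ s.1 s.2‖ := by
      rw [← norm_mul, ← hident, ← norm_mul, ← norm_mul]
      exact norm_sub_le _ _
    _ ≤ _ := by gcongr <;> exact le_max_right _ _

lemma form_mul_Zmax_pow_le {x y x' y' : ℤ} (hZ : 0 < Zmax α β γ δ x y)
    (hZ' : 0 < Zmax α β γ δ x' y') (h : zetaF α β γ δ r x y ≤ zetaF α β γ δ r x' y') :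
    ‖form α β γ δ r x y‖ * Zmax α β γ δ x' y' ^ r ≤ ‖form α β γ δ r x' y'‖ * Zmax α β γ δ x y ^ r :=
  (div_le_div_iff₀ (pow_pos hZ r) (pow_pos hZ' r)).mp h

end Solutions

end Thue

theorem three_solutions_Z_bounds_general (r h : ℕ) (hr : 3 ≤ r)
    (α β γ δ j : ℂ) (hj : j = α * δ - β * γ)
    (ω : ℂ) (hω : ω ^ r = 1)
    (s1 s2 s3 : ℤ × ℤ)
    (hs1 : IsPrimSol α β γ δ r h s1.1 s1.2) (hs2 : IsPrimSol α β γ δ r h s2.1 s2.2)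
    (hs3 : IsPrimSol α β γ δ r h s3.1 s3.2)
    (hrel1 : RelatedTo α β γ δ r ω s1.1 s1.2) (hrel2 : RelatedTo α β γ δ r ω s2.1 s2.2)
    (hrel3 : RelatedTo α β γ δ r ω s3.1 s3.2)
    (hd12 : s1 ≠ s2 ∧ s1 ≠ (-s2.1, -s2.2))
    (hd23 : s2 ≠ s3 ∧ s2 ≠ (-s3.1, -s3.2))
    (hζ12 : zetaF α β γ δ r s2.1 s2.2 ≤ zetaF α β γ δ r s1.1 s1.2)
    (hζ23 : zetaF α β γ δ r s3.1 s3.2 ≤ zetaF α β γ δ r s2.1 s2.2)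
    (hcase : (γ = (starRingEnd ℂ) α ∧ δ = (starRingEnd ℂ) β) ∨
      (∀ s ∈ ({s1, s2, s3} : Set (ℤ × ℤ)), lin α β s.1 s.2 ≠ 0 ∧ lin γ δ s.1 s.2 ≠ 0 ∧
        (muF α β γ δ r s.1 s.2).im = 0)) :
    ‖j‖ / (2 * (h : ℝ) ^ (1 / (r : ℝ))) ≤ Zmax α β γ δ s2.1 s2.2 ∧
    ‖j‖ / (2 * (h : ℝ)) * Zmax α β γ δ s2.1 s2.2 ^ (r - 1)
      ≤ Zmax α β γ δ s3.1 s3.2 ∧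
    ‖j‖ ^ r / ((2 : ℝ) ^ r * (h : ℝ) ^ (2 - 1 / (r : ℝ)))
      ≤ Zmax α β γ δ s3.1 s3.2 := by
  have hr0 : r ≠ 0 := by omega
  have hcase_of : ∀ s ∈ ({s1, s2, s3} : Set (ℤ × ℤ)),
      (γ = starRingEnd ℂ α ∧ δ = starRingEnd ℂ β) ∨
        (lin α β s.1 s.2 ≠ 0 ∧ lin γ δ s.1 s.2 ≠ 0 ∧ (muF α β γ δ r s.1 s.2).im = 0) :=
    fun s hs => hcase.imp_right (· s hs)
  obtain ⟨hZ1, hA1, -⟩ := Thue.bounds_of_relatedTo hr hω hs1.2.1 hrel1 (hcase_of s1 (by simp))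
  obtain ⟨hZ2, hA2, hA2Z⟩ := Thue.bounds_of_relatedTo hr hω hs2.2.1 hrel2 (hcase_of s2 (by simp))
  obtain ⟨hZ3, -, hA3Z⟩ := Thue.bounds_of_relatedTo hr hω hs3.2.1 hrel3 (hcase_of s3 (by simp))
  have hh0 : (0 : ℝ) < h := hs1.2.1.trans_le hs1.2.2
  have hZ2low := Thue.gap_principle_rpow hr0 hh0 (norm_nonneg _) (norm_nonneg _) hZ1.le hZ2.le
    (hA1.trans hs1.2.2) hA2 (Thue.form_mul_Zmax_pow_le hZ2 hZ1 hζ12) hs1.2.2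
    (Thue.norm_le_of_distinct_primitive hj hs1.1 hs2.1 hd12)
  have hZ3low := Thue.gap_principle_pow hr0 hh0 hZ2.le hZ3 hA2Z hs2.2.2 hA3Z
    (Thue.form_mul_Zmax_pow_le hZ3 hZ2 hζ23)
    (Thue.norm_le_of_distinct_primitive hj hs2.1 hs3.1 hd23)
  exact ⟨hZ2low, hZ3low, Thue.pow_div_le_of_gap_principles hr0 hh0 (norm_nonneg j) hZ2low hZ3low⟩

/-- Let `r ≥ 3`, `|j| > 2·h^{2/r}`, and let
`(x_1,y_1), (x_2,y_2), (x_3,y_3)` be primitive solutions of `0 < |F| ≤ h`, pairwise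
distinct up to sign, all related to the same `r`-th root of unity `ω`, with
`ζ_1 ≥ ζ_2 ≥ ζ_3`. Assume either (a) `γ = conj α`, `δ = conj β` (`D < 0`) or (b)
`u_i, v_i ≠ 0` and `μ_i` real for `i = 1,2,3` (`D > 0`). Then `Z_2 ≥ |j|/(2·h^{1/r})`,
`Z_3 ≥ (|j|/(2h))·Z_2^{r−1}`, and consequently `Z_3 ≥ |j|^r/(2^r·h^{2−1/r})`. -/
theorem three_solutions_Z_bounds (r h : ℕ) (hr : 3 ≤ r) (hh : 1 ≤ h)
    (α β γ δ j : ℂ) (hj : j = α * δ - β * γ) (hj0 : j ≠ 0) (hint : IntCoeffs α β γ δ r)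
    (hjbig : 2 * (h : ℝ) ^ ((2 : ℝ) / r) < ‖j‖)
    (ω : ℂ) (hω : ω ^ r = 1)
    (s1 s2 s3 : ℤ × ℤ)
    (hs1 : IsPrimSol α β γ δ r h s1.1 s1.2) (hs2 : IsPrimSol α β γ δ r h s2.1 s2.2)
    (hs3 : IsPrimSol α β γ δ r h s3.1 s3.2)
    (hrel1 : RelatedTo α β γ δ r ω s1.1 s1.2) (hrel2 : RelatedTo α β γ δ r ω s2.1 s2.2)
    (hrel3 : RelatedTo α β γ δ r ω s3.1 s3.2)
    (hd12 : s1 ≠ s2 ∧ s1 ≠ (-s2.1, -s2.2)) (hd13 : s1 ≠ s3 ∧ s1 ≠ (-s3.1, -s3.2))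
    (hd23 : s2 ≠ s3 ∧ s2 ≠ (-s3.1, -s3.2))
    (hζ12 : zetaF α β γ δ r s2.1 s2.2 ≤ zetaF α β γ δ r s1.1 s1.2)
    (hζ23 : zetaF α β γ δ r s3.1 s3.2 ≤ zetaF α β γ δ r s2.1 s2.2)
    (hcase : (γ = (starRingEnd ℂ) α ∧ δ = (starRingEnd ℂ) β) ∨
      (∀ s ∈ ({s1, s2, s3} : Set (ℤ × ℤ)), lin α β s.1 s.2 ≠ 0 ∧ lin γ δ s.1 s.2 ≠ 0 ∧
        (muF α β γ δ r s.1 s.2).im = 0)) :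
    ‖j‖ / (2 * (h : ℝ) ^ (1 / (r : ℝ))) ≤ Zmax α β γ δ s2.1 s2.2 ∧
    ‖j‖ / (2 * (h : ℝ)) * Zmax α β γ δ s2.1 s2.2 ^ (r - 1)
      ≤ Zmax α β γ δ s3.1 s3.2 ∧
    ‖j‖ ^ r / ((2 : ℝ) ^ r * (h : ℝ) ^ (2 - 1 / (r : ℝ)))
      ≤ Zmax α β γ δ s3.1 s3.2 :=
  three_solutions_Z_bounds_general r h hr α β γ δ j hj ω hω s1 s2 s3 hs1 hs2 hs3 hrel1 hrel2 hrel3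
    hd12 hd23 hζ12 hζ23 hcase
end
end

section
/- Let r ≥ 1 be an integer and let u, v be nonzero complex numbers such that μ := (v/u)^r is a positive real number, and let ω be the r-th root of unity related to the pair (u,v). If |u| ≤ |v|, then |u/v − ω| = 1 − |μ|^{-1/r} ≤ |u^r − v^r|/max(|u|,|v|)^r; if |u| > |v|, then |u/v − ω| = |μ|^{-1/r} − 1 ≤ (|u|/|v|)·|u^r − v^r|/max(|u|,|v|)^r. -/
/-!
Since `(u/v)^r` is a positive real, `w := (u/v)·ω⁻¹` satisfies `w^r = ρ^r` with `ρ = |u/v|`;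
the sector `(-π/r, π/r]` is where the principal `r`-th root inverts `z ↦ z^r`, so `w = ρ`,
i.e. `u/v = ρω`. Then `|u/v - ω| = |ρ - 1|` and `|μ|^(-1/r) = ρ`, and both bounds come down
to `1 - t ≤ 1 - t^r` for `t ∈ [0, 1]`, applied to `t = ρ` and to `t = ρ⁻¹` respectively.
-/

open Complex

namespace Complex

theorem eq_of_pow_eq_of_arg_mem {n : ℕ} (hn : n ≠ 0) {x y : ℂ}
    (hx : x.arg ∈ Set.Ioc (-(Real.pi / n)) (Real.pi / n))
    (hy : y.arg ∈ Set.Ioc (-(Real.pi / n)) (Real.pi / n)) (h : x ^ n = y ^ n) : x = y := by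
  rw [← pow_cpow_nat_inv hn hx.1 hx.2, h, pow_cpow_nat_inv hn hy.1 hy.2]

theorem pow_eq_norm_pow_of_pow_eq_ofReal {n : ℕ} {z : ℂ} {x : ℝ} (hx : 0 ≤ x)
    (h : z ^ n = x) : z ^ n = (‖z‖ : ℂ) ^ n := by
  rw [← ofReal_pow, ← norm_pow, h, Complex.norm_of_nonneg hx]

theorem eq_norm_mul_of_arg_mul_inv_mem {n : ℕ} (hn : n ≠ 0) {z ω : ℂ} (hω : ω ^ n = 1)
    {x : ℝ} (hx : 0 ≤ x) (hzx : z ^ n = x)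
    (harg : (z * ω⁻¹).arg ∈ Set.Ioc (-(Real.pi / n)) (Real.pi / n)) : z = ‖z‖ * ω := by
  have hω0 : ω ≠ 0 := by rintro rfl; simp [zero_pow hn] at hω
  have hpi : 0 < Real.pi / n := by positivity
  have hnorm_arg : (‖z‖ : ℂ).arg ∈ Set.Ioc (-(Real.pi / n)) (Real.pi / n) := by
    rw [arg_ofReal_of_nonneg (norm_nonneg z)]; exact ⟨by linarith, hpi.le⟩
  have := eq_of_pow_eq_of_arg_mem hn harg hnorm_arg (by
    rw [mul_pow, inv_pow, hω, inv_one, mul_one, pow_eq_norm_pow_of_pow_eq_ofReal hx hzx])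
  rw [← this, mul_assoc, inv_mul_cancel₀ hω0, mul_one]

theorem one_sub_le_norm_ofReal_pow_sub_one {n : ℕ} (hn : n ≠ 0) {t : ℝ} (h0 : 0 ≤ t)
    (h1 : t ≤ 1) : 1 - t ≤ ‖(t : ℂ) ^ n - 1‖ := by
  rw [← ofReal_pow, ← ofReal_one, ← ofReal_sub, norm_real, Real.norm_eq_abs,
    abs_of_nonpos (by linarith [pow_le_one₀ h0 h1 (n := n)])]
  linarith [pow_le_of_le_one h0 h1 hn]

end Complex

theorem norm_pow_sub_pow_div_norm_pow {𝕜 : Type*} [NormedField 𝕜] (n : ℕ) (u : 𝕜) {v : 𝕜}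
    (hv : v ≠ 0) : ‖u ^ n - v ^ n‖ / ‖v‖ ^ n = ‖(u / v) ^ n - 1‖ := by
  rw [div_pow, div_sub_one (pow_ne_zero n hv), norm_div, norm_pow]

theorem Real.pow_inv_rpow_neg_inv_natCast {n : ℕ} (hn : n ≠ 0) {x : ℝ} (hx : 0 ≤ x) :
    ((x ^ n)⁻¹) ^ (-(1 / (n : ℝ))) = x := by
  rw [Real.inv_rpow (by positivity), Real.rpow_neg (by positivity), inv_inv, one_div,
    Real.pow_rpow_inv_natCast hx hn]

/-- Let `r ≥ 1` and let `u, v` be nonzero complex numbers such that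
`μ := (v/u)^r` is a positive real number, and let `ω` be the `r`-th root of unity related
to `(u,v)`. If `|u| ≤ |v|`, then `|u/v − ω| = 1 − |μ|^{-1/r} ≤ |u^r − v^r|/max(|u|,|v|)^r`;
if `|u| > |v|`, then `|u/v − ω| = |μ|^{-1/r} − 1 ≤ (|u|/|v|)·|u^r − v^r|/max(|u|,|v|)^r`. -/
theorem rel_root_dist_formula (r : ℕ) (hr : 1 ≤ r) (u v : ℂ) (hu : u ≠ 0) (hv : v ≠ 0)
    (μ : ℂ) (hμ : μ = (v / u) ^ r) (hμpos : ∃ m : ℝ, 0 < m ∧ (m : ℂ) = μ)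
    (ω : ℂ) (hω : ω ^ r = 1)
    (hrel : (u / v * ω⁻¹).arg ∈ Set.Ioc (-(Real.pi / r)) (Real.pi / r)) :
    (‖u‖ ≤ ‖v‖ →
      ‖u / v - ω‖ = 1 - ‖μ‖ ^ (-(1 / (r : ℝ))) ∧
      ‖u / v - ω‖ ≤
        ‖u ^ r - v ^ r‖ / max (‖u‖) (‖v‖) ^ r) ∧
    (‖v‖ < ‖u‖ →
      ‖u / v - ω‖ = ‖μ‖ ^ (-(1 / (r : ℝ))) - 1 ∧
      ‖u / v - ω‖ ≤ ‖u‖ / ‖v‖ *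
        (‖u ^ r - v ^ r‖ / max (‖u‖) (‖v‖) ^ r)) := by
  obtain ⟨m, hm, rfl⟩ := hμpos
  have hr0 : r ≠ 0 := by omega
  set ρ := ‖u / v‖ with hρ_def
  have hρ : 0 < ρ := norm_pos_iff.2 (div_ne_zero hu hv)
  have hzr : (u / v) ^ r = ((m⁻¹ : ℝ) : ℂ) := by rw [ofReal_inv, hμ, ← inv_pow, inv_div]
  have hz : u / v = ρ * ω := eq_norm_mul_of_arg_mul_inv_mem hr0 hω (inv_nonneg.2 hm.le) hzr hrel
  have hdist : ‖u / v - ω‖ = |ρ - 1| := by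
    rw [hz, ← sub_one_mul, norm_mul, norm_eq_one_of_pow_eq_one hω hr0, mul_one, ← ofReal_one,
      ← ofReal_sub, norm_real, Real.norm_eq_abs]
  have hrpow : ‖(m : ℂ)‖ ^ (-(1 / (r : ℝ))) = ρ := by
    rw [hμ, norm_pow, ← inv_div, norm_inv, inv_pow, Real.pow_inv_rpow_neg_inv_natCast hr0 hρ.le]
  constructor
  · intro huv
    have hρ1 : ρ ≤ 1 := by rwa [hρ_def, norm_div, div_le_one (norm_pos_iff.2 hv)]
    rw [hdist, abs_of_nonpos (sub_nonpos.2 hρ1), neg_sub, hrpow, max_eq_right huv,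
      norm_pow_sub_pow_div_norm_pow r u hv,
      pow_eq_norm_pow_of_pow_eq_ofReal (inv_nonneg.2 hm.le) hzr]
    exact ⟨rfl, one_sub_le_norm_ofReal_pow_sub_one hr0 hρ.le hρ1⟩
  · intro hvu
    have hρ1 : 1 < ρ := by rwa [hρ_def, norm_div, one_lt_div (norm_pos_iff.2 hv)]
    have hμρ : (v / u) ^ r = ((ρ⁻¹ : ℝ) : ℂ) ^ r := by
      rw [← inv_div, inv_pow, pow_eq_norm_pow_of_pow_eq_ofReal (inv_nonneg.2 hm.le) hzr,
        ofReal_inv, inv_pow]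
    rw [hdist, abs_of_pos (sub_pos.2 hρ1), hrpow, max_eq_left hvu.le, ← norm_div, norm_sub_rev,
      norm_pow_sub_pow_div_norm_pow r v hu, hμρ]
    refine ⟨rfl, ?_⟩
    calc ρ - 1 = ρ * (1 - ρ⁻¹) := by field_simp
      _ ≤ ρ * ‖((ρ⁻¹ : ℝ) : ℂ) ^ r - 1‖ :=
        mul_le_mul_of_nonneg_left (one_sub_le_norm_ofReal_pow_sub_one hr0
          (inv_nonneg.2 hρ.le) (inv_le_one_of_one_le₀ hρ1.le)) hρ.le
end
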